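/- arXiv:1411.4957 — 5 statements merged into one kernel-verified Lean document; each statement's English description precedes it below -/
import Mathlib

section
/- Let G be a k-uniform hypergraph on n vertices. Then there exists a tight component G* of G such that e_k(𝒢*) ≥ (e_{k-1}(𝒢*)/binom(n,k-1)) · e(G), where 𝒢* is the k-complex generated by the down-closure of G*. -/
open Finset

variable {V : Type*} [DecidableEq V]

/-- The number of edges of cardinality `i` of a hypergraph. -/
def ecount (G : Finset (Finset V)) (i : ℕ) : ℕ := (G.filter fun e => e.card = i).card

/-- The complex generated by the down-closure of `G`: all subsets of edges of `G`. -/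
def downClosure (G : Finset (Finset V)) : Finset (Finset V) := G.biUnion Finset.powerset

/-- `W` is a tight walk in the `k`-graph `G`: every `k` consecutive vertices form an edge. -/
def IsTightWalk (G : Finset (Finset V)) (k : ℕ) (W : List V) : Prop :=
  k ≤ W.length ∧ ∀ i, i + k ≤ W.length → ((W.drop i).take k).toFinset ∈ G

/-- Edges `e` and `f` of the `k`-graph `G` are tightly connected: there is a tight walk
beginning with the vertices of `e` (in some order) and ending with the vertices of `f`
(in some order). -/
def TightlyConnected (G : Finset (Finset V)) (k : ℕ) (e f : Finset V) : Prop :=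
  ∃ W : List V, IsTightWalk G k W ∧ (W.take k).toFinset = e ∧
    (W.reverse.take k).toFinset = f

/-- `C` is a tight component of the `k`-graph `G`: the equivalence class of some edge
under the tightly-connected relation. -/
def IsTightComponent (G : Finset (Finset V)) (k : ℕ) (C : Finset (Finset V)) : Prop :=
  ∃ e₀ ∈ G, ∀ f, f ∈ C ↔ f ∈ G ∧ TightlyConnected G k e₀ f

/-!
Between edges of a `k`-uniform `G`, tight connectivity is the equivalence relation generated by
sharing `k - 1` vertices. One direction is read off consecutive windows of a tight walk. For the
other, if a walk starts with an ordering `a ++ v :: b` of the edge `e` and `f = (e \ {v}) ∪ {x}`,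
prepending `b` only rotates the first window, after which prepending `x` makes `f` the first
window. Consequently distinct tight components have disjoint `(k - 1)`-shadows: their shadow
sizes sum to at most `n.choose (k - 1)` while their sizes sum to `e(G)`, so some component `C`
has `|∂C| * e(G) ≤ |C| * n.choose (k - 1)`.
-/

theorem List.take_eq_of_take_succ_eq {α : Type*} {l c : List α} {y : α}
    (h : l.take (c.length + 1) = c ++ [y]) : l.take c.length = c :=
  calc l.take c.length = (l.take (c.length + 1)).take c.length := by simp [List.take_take]
    _ = c := by rw [h, List.take_left]

theorem Finset.exists_eq_insert_erase_of_card_inter {α : Type*} [DecidableEq α]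
    {e f : Finset α} (hef : e ≠ f) (hcard : e.card = f.card)
    (hinter : e.card - 1 ≤ (e ∩ f).card) : ∃ v ∈ e, ∃ x, f = insert x (e.erase v) := by
  obtain ⟨v, hve, hvf⟩ : ∃ v ∈ e, v ∉ f :=
    Finset.not_subset.mp fun hsub => hef (Finset.eq_of_subset_of_card_le hsub hcard.ge)
  have herase : e.erase v = e ∩ f := by
    refine (Finset.eq_of_subset_of_card_le (fun y hy => ?_) ?_).symm
    · rw [Finset.mem_inter] at hy
      exact Finset.mem_erase.mpr ⟨fun hyv => hvf (hyv ▸ hy.2), hy.1⟩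
    · rwa [Finset.card_erase_of_mem hve]
  obtain ⟨x, -, hx⟩ := Finset.exists_eq_insert_iff.mpr
    ⟨herase ▸ Finset.inter_subset_right, by
      have := Finset.card_pos.mpr ⟨v, hve⟩
      rw [Finset.card_erase_of_mem hve]; omega⟩
  exact ⟨v, hve, x, hx.symm⟩

theorem Finset.exists_mul_sum_le_mul_of_sum_le {ι : Type*} {s : Finset ι} (hs : s.Nonempty)
    {a b : ι → ℕ} {A : ℕ} (ha : ∑ i ∈ s, a i ≤ A) :
    ∃ i ∈ s, a i * ∑ j ∈ s, b j ≤ b i * A := by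
  refine Finset.exists_le_of_sum_le hs ?_
  rw [← Finset.sum_mul, ← Finset.sum_mul, mul_comm]
  exact Nat.mul_le_mul_left _ ha

theorem ecount_downClosure_of_forall_card_eq {C : Finset (Finset V)} {k : ℕ}
    (hC : ∀ e ∈ C, e.card = k) : ecount (downClosure C) k = C.card := by
  unfold ecount
  congr 1
  ext s
  simp only [Finset.mem_filter, downClosure, Finset.mem_biUnion, Finset.mem_powerset]
  constructor
  · rintro ⟨⟨u, hu, hsu⟩, hs⟩
    rwa [Finset.eq_of_subset_of_card_le hsu (by rw [hC u hu, hs])]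
  · exact fun hs => ⟨⟨s, hs, subset_rfl⟩, hC s hs⟩

theorem sum_ecount_le_choose [Fintype V] {ι : Type*} (s : Finset ι) (H : ι → Finset (Finset V))
    (i : ℕ) (h : (s : Set ι).PairwiseDisjoint fun j => (H j).filter (·.card = i)) :
    ∑ j ∈ s, ecount (H j) i ≤ (Fintype.card V).choose i :=
  calc ∑ j ∈ s, ecount (H j) i = (s.biUnion fun j => (H j).filter (·.card = i)).card :=
        (Finset.card_biUnion h).symm
    _ ≤ (Finset.univ.powersetCard i).card := Finset.card_le_card fun t ht => by
        simp only [Finset.mem_biUnion, Finset.mem_filter] at ht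
        obtain ⟨-, -, -, ht⟩ := ht
        exact Finset.mem_powersetCard.mpr ⟨Finset.subset_univ t, ht⟩
    _ = (Fintype.card V).choose i := by rw [Finset.card_powersetCard, Finset.card_univ]

section TightWalk

variable {G : Finset (Finset V)} {k : ℕ}

theorem isTightWalk_cons_iff {x : V} {W : List V} (hk : k ≤ W.length) :
    IsTightWalk G k (x :: W) ↔ ((x :: W).take k).toFinset ∈ G ∧ IsTightWalk G k W := by
  simp only [IsTightWalk, List.length_cons]
  constructor
  · rintro ⟨-, h⟩
    exact ⟨h 0 (by omega), hk, fun i hi => h (i + 1) (by omega)⟩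
  · rintro ⟨h₀, -, h⟩
    refine ⟨by omega, fun i hi => ?_⟩
    cases i with
    | zero => exact h₀
    | succ i => exact h i (by omega)

theorem IsTightWalk.cons_of_take_eq {W c : List V} {y : V} (hW : IsTightWalk G k W)
    (h : W.take k = c ++ [y]) : IsTightWalk G k (y :: W) ∧ (y :: W).take k = y :: c := by
  obtain rfl : k = c.length + 1 := by simpa [hW.1] using congrArg List.length h
  have htake : (y :: W).take (c.length + 1) = y :: c := by
    rw [List.take_succ_cons, List.take_eq_of_take_succ_eq h]
  refine ⟨(isTightWalk_cons_iff hW.1).mpr ⟨?_, hW⟩, htake⟩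
  have hwindow := hW.2 0 (by simpa using hW.1)
  rw [List.drop_zero, h] at hwindow
  rw [htake]
  convert hwindow using 1
  ext
  simp

theorem IsTightWalk.append_of_take_eq {W a b : List V} (hW : IsTightWalk G k W)
    (h : W.take k = a ++ b) : IsTightWalk G k (b ++ W) ∧ (b ++ W).take k = b ++ a := by
  induction b using List.reverseRecOn generalizing W a with
  | nil =>
    simp only [List.nil_append, List.append_nil] at h ⊢
    exact ⟨hW, h⟩
  | append_singleton b y ih =>
    obtain ⟨hyW, hy⟩ := hW.cons_of_take_eq (c := a ++ b) (by rw [h, List.append_assoc])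
    simpa using ih hyW (a := y :: a) hy

theorem IsTightWalk.exists_prepend {W : List V} {f : Finset V} (hW : IsTightWalk G k W)
    (hW₀ : (W.take k).toFinset.card = k) (hf : f ∈ G) (hfk : f.card = k)
    (hadj : k - 1 ≤ ((W.take k).toFinset ∩ f).card) :
    ∃ p, IsTightWalk G k (p ++ W) ∧ ((p ++ W).take k).toFinset = f := by
  by_cases hef : (W.take k).toFinset = f
  · exact ⟨[], hW, hef⟩
  obtain ⟨v, hv, x, rfl⟩ :=
    Finset.exists_eq_insert_erase_of_card_inter hef (hW₀.trans hfk.symm) (by rwa [hW₀])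
  obtain ⟨a, b, hab⟩ := List.append_of_mem (List.mem_toFinset.mp hv)
  have hlen : (b ++ a).length + 1 = k := by
    have := congrArg List.length hab
    simp only [List.length_take, hW.1, min_eq_left, List.length_append, List.length_cons] at this
    simp only [List.length_append]
    omega
  obtain ⟨hbW, hbtake⟩ := hW.append_of_take_eq (a := a ++ [v]) (b := b) (by simpa using hab)
  have htake : (x :: (b ++ W)).take k = x :: (b ++ a) := by
    rw [← hlen, List.take_succ_cons,
      List.take_eq_of_take_succ_eq (by rw [hlen, hbtake, List.append_assoc])]
  have hwindow : (x :: (b ++ a)).toFinset = insert x ((W.take k).toFinset.erase v) := by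
    refine (Finset.eq_of_subset_of_card_le (fun y hy => ?_) ?_).symm
    · simp only [hab, Finset.mem_insert, Finset.mem_erase, List.mem_toFinset, List.mem_append,
        List.mem_cons] at hy ⊢
      tauto
    · rw [hfk, ← hlen]
      exact List.toFinset_card_le _
  have hk : k ≤ (b ++ W).length := by
    rw [List.length_append]
    exact le_add_left hW.1
  refine ⟨x :: b, ?_⟩
  rw [List.cons_append, isTightWalk_cons_iff hk, htake, hwindow]
  exact ⟨⟨hf, hbW⟩, rfl⟩

end TightWalk

def TightlyAdj (G : Finset (Finset V)) (k : ℕ) (e f : Finset V) : Prop :=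
  e ∈ G ∧ f ∈ G ∧ k - 1 ≤ (e ∩ f).card

section TightlyAdj

variable {G : Finset (Finset V)} {k : ℕ}

theorem TightlyAdj.symm {e f : Finset V} (h : TightlyAdj G k e f) : TightlyAdj G k f e :=
  ⟨h.2.1, h.1, Finset.inter_comm e f ▸ h.2.2⟩

instance : Std.Symm (TightlyAdj G k) := ⟨fun _ _ => TightlyAdj.symm⟩

theorem card_inter_take_cons_take (x : V) (W : List V)
    (hx : ((x :: W).take k).toFinset.card = k) :
    k - 1 ≤ (((x :: W).take k).toFinset ∩ (W.take k).toFinset).card := by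
  cases k with
  | zero => exact Nat.zero_le _
  | succ m =>
    rw [List.take_succ_cons, List.toFinset_cons] at hx ⊢
    have hsub :
        (W.take m).toFinset ⊆ insert x (W.take m).toFinset ∩ (W.take (m + 1)).toFinset :=
      Finset.subset_inter (Finset.subset_insert _ _)
        fun y hy => List.mem_toFinset.mpr
          ((List.take_prefix_take_left (Nat.le_succ m)).subset (List.mem_toFinset.mp hy))
    have := Finset.card_insert_le x (W.take m).toFinset
    exact (by omega : m + 1 - 1 ≤ _).trans (Finset.card_le_card hsub)

theorem IsTightWalk.reflTransGen (hG : ∀ e ∈ G, e.card = k) {W : List V}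
    (hW : IsTightWalk G k W) :
    Relation.ReflTransGen (TightlyAdj G k) (W.take k).toFinset (W.reverse.take k).toFinset := by
  induction W with
  | nil => simp [Relation.ReflTransGen.refl]
  | cons x W ih =>
    by_cases hk : k ≤ W.length
    · obtain ⟨hx, hW'⟩ := (isTightWalk_cons_iff hk).mp hW
      have hW₀ : (W.take k).toFinset ∈ G := hW'.2 0 (by simpa using hk)
      rw [List.reverse_cons, List.take_append_of_le_length (by simpa using hk)]
      exact .head ⟨hx, hW₀, card_inter_take_cons_take x W (hG _ hx)⟩ (ih hW')
    · have hlen : (x :: W).length ≤ k := by simp; omega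
      rw [List.take_of_length_le hlen, List.take_of_length_le (by simpa using hlen),
        List.toFinset_reverse]

theorem TightlyConnected.refl {e : Finset V} (he : e ∈ G) (hek : e.card = k) :
    TightlyConnected G k e e := by
  have htake : e.toList.take k = e.toList := List.take_of_length_le (by simp [hek])
  have hrev : e.toList.reverse.take k = e.toList.reverse := List.take_of_length_le (by simp [hek])
  refine ⟨e.toList, ⟨by rw [Finset.length_toList, hek], fun i hi => ?_⟩, ?_, ?_⟩
  · obtain rfl : i = 0 := by rw [Finset.length_toList, hek] at hi; omega
    rwa [List.drop_zero, htake, Finset.toList_toFinset]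
  · rw [htake, Finset.toList_toFinset]
  · rw [hrev, List.toFinset_reverse, Finset.toList_toFinset]

theorem tightlyConnected_iff_reflTransGen (hG : ∀ e ∈ G, e.card = k) {e f : Finset V}
    (hf : f ∈ G) : TightlyConnected G k e f ↔ Relation.ReflTransGen (TightlyAdj G k) e f := by
  refine ⟨fun ⟨W, hW, he, hf⟩ => he ▸ hf ▸ hW.reflTransGen hG, fun h => ?_⟩
  induction h using Relation.ReflTransGen.head_induction_on with
  | refl => exact .refl hf (hG f hf)
  | head hadj _ ih =>
    obtain ⟨W, hW, rfl, hend⟩ := ih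
    obtain ⟨p, hpW, hp⟩ :=
      hW.exists_prepend (hG _ hadj.2.1) hadj.1 (hG _ hadj.1) hadj.symm.2.2
    refine ⟨p ++ W, hpW, hp, ?_⟩
    rwa [List.reverse_append, List.take_append_of_le_length (by simpa using hW.1)]

end TightlyAdj

open Classical in
noncomputable def tightComponent (G : Finset (Finset V)) (k : ℕ) (e : Finset V) :
    Finset (Finset V) :=
  G.filter (Relation.ReflTransGen (TightlyAdj G k) e)

section tightComponent

variable {G : Finset (Finset V)} {k : ℕ}

open Classical in
theorem mem_tightComponent {e f : Finset V} :
    f ∈ tightComponent G k e ↔ f ∈ G ∧ Relation.ReflTransGen (TightlyAdj G k) e f :=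
  Finset.mem_filter

theorem tightComponent_eq_of_reflTransGen {e f : Finset V}
    (h : Relation.ReflTransGen (TightlyAdj G k) e f) :
    tightComponent G k e = tightComponent G k f := by
  ext g
  simp only [mem_tightComponent, and_congr_right_iff]
  exact fun _ => ⟨(symm h).trans, h.trans⟩

theorem isTightComponent_tightComponent (hG : ∀ e ∈ G, e.card = k) {e : Finset V}
    (he : e ∈ G) : IsTightComponent G k (tightComponent G k e) :=
  ⟨e, he, fun f => by
    rw [mem_tightComponent]
    exact and_congr_right fun hf => (tightlyConnected_iff_reflTransGen hG hf).symm⟩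

theorem sum_card_tightComponent :
    ∑ C ∈ G.image (tightComponent G k), C.card = G.card := by
  rw [Finset.card_eq_sum_card_image (tightComponent G k) G]
  refine Finset.sum_congr rfl fun C hC => ?_
  obtain ⟨e, -, rfl⟩ := Finset.mem_image.mp hC
  congr 1
  ext f
  rw [Finset.mem_filter, mem_tightComponent]
  refine and_congr_right fun hf =>
    ⟨fun h => (tightComponent_eq_of_reflTransGen h).symm, fun h => ?_⟩
  have hff : f ∈ tightComponent G k f := mem_tightComponent.mpr ⟨hf, .refl⟩
  exact (mem_tightComponent.mp (h ▸ hff)).2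

theorem pairwiseDisjoint_filter_card_downClosure_tightComponent :
    (G.image (tightComponent G k) : Set (Finset (Finset V))).PairwiseDisjoint
      fun C => (downClosure C).filter (·.card = k - 1) := by
  intro C hC C' hC' hne
  obtain ⟨e, -, rfl⟩ := Finset.mem_image.mp hC
  obtain ⟨e', -, rfl⟩ := Finset.mem_image.mp hC'
  refine Finset.disjoint_left.mpr fun s hs hs' => hne ?_
  simp only [Finset.mem_filter, downClosure, Finset.mem_biUnion, Finset.mem_powerset,
    mem_tightComponent] at hs hs'
  obtain ⟨⟨u, ⟨huG, hu⟩, hsu⟩, hs⟩ := hs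
  obtain ⟨⟨u', ⟨hu'G, hu'⟩, hsu'⟩, -⟩ := hs'
  have hadj : TightlyAdj G k u u' :=
    ⟨huG, hu'G, hs ▸ Finset.card_le_card (Finset.subset_inter hsu hsu')⟩
  exact tightComponent_eq_of_reflTransGen ((hu.tail hadj).trans (symm hu'))

end tightComponent

/-- Every (nonempty) `k`-graph `G` on `n` vertices has a tight component
`G*` with `e_k(𝒢*) ≥ (e_{k-1}(𝒢*)/(n choose (k-1))) · e(G)`, where `𝒢*` is the `k`-complex
generated by the down-closure of `G*`. -/
theorem exists_dense_tight_component [Fintype V] (k n : ℕ) (hn : Fintype.card V = n)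
    (G : Finset (Finset V)) (hG : ∀ e ∈ G, e.card = k) (hne : G.Nonempty) :
    ∃ C : Finset (Finset V), IsTightComponent G k C ∧
      ecount (downClosure C) (k - 1) * G.card ≤
        ecount (downClosure C) k * Nat.choose n (k - 1) := by
  subst hn
  obtain ⟨C, hC, hdense⟩ := Finset.exists_mul_sum_le_mul_of_sum_le
    (hne.image (tightComponent G k)) (b := Finset.card)
    (sum_ecount_le_choose _ downClosure (k - 1)
      pairwiseDisjoint_filter_card_downClosure_tightComponent)
  obtain ⟨e, he, rfl⟩ := Finset.mem_image.mp hC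
  refine ⟨_, isTightComponent_tightComponent hG he, ?_⟩
  rwa [ecount_downClosure_of_forall_card_eq fun f hf => hG f (mem_tightComponent.mp hf).1,
    ← sum_card_tightComponent]
end

section
/- Let k and r be natural numbers and let 𝒢 be a k-complex satisfying e_k(𝒢) ≥ (r-1)·e_{k-1}(𝒢) + 1. Then the k-uniform level 𝒢^(k) contains a matching of size at least r. -/
open Finset

variable {V : Type*} [DecidableEq V]

/-!
Frankl's theorem: a `k`-uniform family `ℱ` (`k ≥ 1`) with matching number `ν` satisfies
`|ℱ| ≤ ν · |∂ℱ|`. For `ℱ = 𝒢^(k)` the shadow lies in `𝒢^(k-1)` because `𝒢` is down-closed, so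
`(r - 1) · e_{k-1} < e_k ≤ ν · e_{k-1}`, whence `ν ≥ r`.

Frankl's inequality is proved for families on `{0, …, n-1}` by induction on `n`. A
`{u}`-`{v}`-compression with `u < v` keeps `|ℱ|`, does not increase `ν` (swap `u` and `v` in a
matching) or `|∂ℱ|`, and lowers the sum of all elements, so `ℱ` may be taken shifted. For `k = 1`,
`ℱ` is itself a matching. If `n < k(ν + 1)`, the local LYM inequality `k|ℱ| ≤ (n - k + 1)|∂ℱ|`
suffices. Otherwise split `ℱ` at the vertex `n - 1` into the sets avoiding it and its link. Both
have matching number at most `ν`: by shiftedness, the sets of a matching of the link can each be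
completed by a distinct vertex outside the matching, of which there are enough since
`n ≥ k(ν + 1)`. Their shadows embed disjointly into `∂ℱ`.
-/

open scoped FinsetFamily
open UV

namespace Finset

variable {α β : Type*}

open scoped Classical in
noncomputable def matchingNumber (𝒜 : Finset (Finset α)) : ℕ :=
  (𝒜.powerset.filter fun M : Finset (Finset α) => (M : Set (Finset α)).Pairwise Disjoint).sup card

variable {𝒜 M : Finset (Finset α)}

theorem card_le_matchingNumber (hM : M ⊆ 𝒜) (hMd : (M : Set (Finset α)).Pairwise Disjoint) :
    #M ≤ matchingNumber 𝒜 := by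
  classical
  exact le_sup (f := card) (mem_filter.2 ⟨mem_powerset.2 hM, hMd⟩)

theorem exists_card_eq_matchingNumber (𝒜 : Finset (Finset α)) :
    ∃ M ⊆ 𝒜, (M : Set (Finset α)).Pairwise Disjoint ∧ #M = matchingNumber 𝒜 := by
  classical
  obtain ⟨M, hM, hcard⟩ := exists_mem_eq_sup
    (𝒜.powerset.filter fun M : Finset (Finset α) => (M : Set (Finset α)).Pairwise Disjoint)
    ⟨∅, by simp⟩ card
  rw [mem_filter, mem_powerset] at hM
  exact ⟨M, hM.1, hM.2, hcard.symm⟩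

theorem matchingNumber_le_of_forall_exists {ℬ : Finset (Finset β)}
    (h : ∀ M ⊆ 𝒜, (M : Set (Finset α)).Pairwise Disjoint →
      ∃ M' ⊆ ℬ, (M' : Set (Finset β)).Pairwise Disjoint ∧ #M ≤ #M') :
    matchingNumber 𝒜 ≤ matchingNumber ℬ := by
  obtain ⟨M, hM𝒜, hMd, hcard⟩ := exists_card_eq_matchingNumber 𝒜
  obtain ⟨M', hM'ℬ, hM'd, hle⟩ := h M hM𝒜 hMd
  exact hcard ▸ hle.trans (card_le_matchingNumber hM'ℬ hM'd)

theorem matchingNumber_mono (h : 𝒜 ⊆ ℬ) : matchingNumber 𝒜 ≤ matchingNumber ℬ :=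
  matchingNumber_le_of_forall_exists fun M hM hMd => ⟨M, hM.trans h, hMd, le_rfl⟩

theorem pairwise_disjoint_of_sized_le_one {k : ℕ} (h𝒜 : (𝒜 : Set (Finset α)).Sized k)
    (hk : k ≤ 1) : (𝒜 : Set (Finset α)).Pairwise Disjoint := by
  intro s hs t ht hst
  refine disjoint_left.2 fun a has hat => hst ?_
  have hs1 : s = {a} :=
    eq_singleton_iff_unique_mem.2 ⟨has, fun b hb => card_le_one.1 (h𝒜 hs ▸ hk) b hb a has⟩
  have ht1 : t = {a} :=
    eq_singleton_iff_unique_mem.2 ⟨hat, fun b hb => card_le_one.1 (h𝒜 ht ▸ hk) b hb a hat⟩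
  rw [hs1, ht1]

theorem one_le_matchingNumber (h : 𝒜.Nonempty) : 1 ≤ matchingNumber 𝒜 := by
  obtain ⟨s, hs⟩ := h
  simpa using card_le_matchingNumber (singleton_subset_iff.2 hs) (by simp)

theorem pairwise_disjoint_map (f : α ↪ β) :
    ((M.map (mapEmbedding f).toEmbedding : Finset (Finset β)) : Set (Finset β)).Pairwise Disjoint ↔
      (M : Set (Finset α)).Pairwise Disjoint := by
  rw [coe_map, Set.InjOn.pairwise_image (mapEmbedding f).toEmbedding.injective.injOn]
  simp [Set.Pairwise, Function.onFun]

theorem matchingNumber_map (f : α ↪ β) :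
    matchingNumber (𝒜.map (mapEmbedding f).toEmbedding) = matchingNumber 𝒜 := by
  refine le_antisymm (matchingNumber_le_of_forall_exists fun M hM hMd => ?_)
    (matchingNumber_le_of_forall_exists fun M hM hMd => ?_)
  · obtain ⟨M₀, hM₀, rfl⟩ := subset_map_iff.1 hM
    exact ⟨M₀, hM₀, (pairwise_disjoint_map f).1 hMd, by simp⟩
  · exact ⟨_, map_subset_map.2 hM, (pairwise_disjoint_map f).2 hMd, by simp⟩

theorem sized_map_iff (f : α ↪ β) {k : ℕ} :
    ((𝒜.map (mapEmbedding f).toEmbedding : Finset (Finset β)) : Set (Finset β)).Sized k ↔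
      (𝒜 : Set (Finset α)).Sized k := by
  simp [Set.Sized]

theorem shadow_map [DecidableEq α] [DecidableEq β] (f : α ↪ β) :
    ∂ (𝒜.map (mapEmbedding f).toEmbedding) = (∂ 𝒜).map (mapEmbedding f).toEmbedding := by
  ext t
  simp [mem_shadow_iff, map_erase, and_assoc]

theorem exists_eq_map_subtype [DecidableEq α] {s : Finset α} (h : ∀ t ∈ 𝒜, t ⊆ s) :
    ∃ ℬ : Finset (Finset s), 𝒜 = ℬ.map (mapEmbedding (.subtype (· ∈ s))).toEmbedding := by
  have : 𝒜 ⊆ (univ : Finset (Finset s)).map (mapEmbedding (.subtype (· ∈ s))).toEmbedding :=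
    fun t ht => mem_map.2 ⟨t.subtype (· ∈ s), mem_univ _, subtype_map_of_mem (h t ht)⟩
  obtain ⟨ℬ, -, h𝒜⟩ := subset_map_iff.1 this
  exact ⟨ℬ, h𝒜⟩

section

variable [DecidableEq α] {s : Finset α} {u v : α}

theorem map_swap_of_notMem_of_notMem (hu : u ∉ s) (hv : v ∉ s) :
    s.map (Equiv.swap u v).toEmbedding = s := by
  ext x
  simp only [mem_map_equiv, Equiv.symm_swap]
  by_cases hxu : x = u
  · subst hxu; simp [hu, hv]
  by_cases hxv : x = v
  · subst hxv; simp [hu, hv]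
  rw [Equiv.swap_apply_of_ne_of_ne hxu hxv]

theorem map_swap_of_mem_of_notMem (hu : u ∈ s) (hv : v ∉ s) :
    s.map (Equiv.swap u v).toEmbedding = (s ∪ {v}) \ {u} := by
  ext x
  simp only [mem_map_equiv, Equiv.symm_swap, mem_sdiff, mem_union, mem_singleton]
  by_cases hxu : x = u
  · subst hxu; simp [hv]
  by_cases hxv : x = v
  · subst hxv; simp [hu, hxu]
  rw [Equiv.swap_apply_of_ne_of_ne hxu hxv]
  simp [hxu, hxv]

theorem _root_.Set.Sized.memberSubfamily {k : ℕ} {a : α} (h : (𝒜 : Set (Finset α)).Sized k) :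
    ((𝒜.memberSubfamily a : Finset (Finset α)) : Set (Finset α)).Sized (k - 1) := by
  intro s hs
  obtain ⟨hs𝒜, has⟩ := mem_memberSubfamily.1 hs
  have := h hs𝒜
  rw [card_insert_of_notMem has] at this
  omega

theorem card_shadow_nonMemberSubfamily_add_card_shadow_memberSubfamily_le (a : α)
    (𝒜 : Finset (Finset α)) :
    #(∂ (𝒜.nonMemberSubfamily a)) + #(∂ (𝒜.memberSubfamily a)) ≤ #(∂ 𝒜) := by
  have hnotMem : ∀ t ∈ ∂ (𝒜.memberSubfamily a), a ∉ t := fun t ht hat => by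
    obtain ⟨s, hs, hts⟩ := exists_subset_of_mem_shadow ht
    exact (mem_memberSubfamily.1 hs).2 (hts hat)
  have hinsert : (∂ (𝒜.memberSubfamily a)).image (insert a) ⊆ ∂ 𝒜 := by
    intro _ hat
    obtain ⟨t, ht, rfl⟩ := mem_image.1 hat
    obtain ⟨s, hs, b, hb, rfl⟩ := mem_shadow_iff.1 ht
    have hab : a ≠ b := fun h => (mem_memberSubfamily.1 hs).2 (h ▸ hb)
    rw [← erase_insert_of_ne hab]
    exact erase_mem_shadow (mem_memberSubfamily.1 hs).1 (mem_insert_of_mem hb)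
  have hdisj :
      Disjoint (∂ (𝒜.nonMemberSubfamily a)) ((∂ (𝒜.memberSubfamily a)).image (insert a)) := by
    rw [disjoint_right]
    intro _ ht hnon
    obtain ⟨t, -, rfl⟩ := mem_image.1 ht
    obtain ⟨s, hs, hts⟩ := exists_subset_of_mem_shadow hnon
    exact (mem_nonMemberSubfamily.1 hs).2 (hts (mem_insert_self a t))
  have hinj : Set.InjOn (insert a) (∂ (𝒜.memberSubfamily a) : Set (Finset α)) :=
    fun s hs t ht h => by rw [← erase_insert (hnotMem s hs), h, erase_insert (hnotMem t ht)]
  calc #(∂ (𝒜.nonMemberSubfamily a)) + #(∂ (𝒜.memberSubfamily a))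
      = #(∂ (𝒜.nonMemberSubfamily a) ∪ (∂ (𝒜.memberSubfamily a)).image (insert a)) := by
        rw [card_union_of_disjoint hdisj, card_image_of_injOn hinj]
    _ ≤ #(∂ 𝒜) := card_le_card (union_subset (shadow_mono (filter_subset _ _)) hinsert)

theorem pairwise_disjoint_image_insert {φ : Finset α → α}
    (hMd : (M : Set (Finset α)).Pairwise Disjoint) (hφ : Set.InjOn φ M)
    (hφM : ∀ s ∈ M, ∀ t ∈ M, φ s ∉ t) :
    ((M.image fun s => insert (φ s) s : Finset (Finset α)) : Set (Finset α)).Pairwise Disjoint ∧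
      #(M.image fun s => insert (φ s) s) = #M := by
  have hdisj : ∀ s ∈ M, ∀ t ∈ M, s ≠ t → Disjoint (insert (φ s) s) (insert (φ t) t) :=
    fun s hs t ht hst => by
      simp only [disjoint_insert_left, disjoint_insert_right, mem_insert, not_or]
      exact ⟨⟨fun h => hst (hφ hs ht h.symm), hφM t ht s hs⟩, hφM s hs t ht, hMd hs ht hst⟩
  have hinj : Set.InjOn (fun s => insert (φ s) s) M := fun s hs t ht h => by
    by_contra hst
    have hst' : insert (φ s) s = insert (φ t) t := h
    have := hdisj s hs t ht hst
    rw [hst', disjoint_self] at this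
    exact (insert_nonempty _ _).ne_empty this
  refine ⟨?_, card_image_of_injOn hinj⟩
  rw [coe_image, hinj.pairwise_image]
  exact fun s hs t ht hst => hdisj s hs t ht hst

theorem card_le_matchingNumber_mul_card_shadow_of_sized_one
    (h𝒜 : (𝒜 : Set (Finset α)).Sized 1) : #𝒜 ≤ matchingNumber 𝒜 * #(∂ 𝒜) := by
  rcases 𝒜.eq_empty_or_nonempty with rfl | ⟨s, hs⟩
  · simp
  obtain ⟨a, rfl⟩ := card_eq_one.1 (h𝒜 hs)
  calc #𝒜 ≤ matchingNumber 𝒜 :=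
        card_le_matchingNumber subset_rfl (pairwise_disjoint_of_sized_le_one h𝒜 le_rfl)
    _ ≤ matchingNumber 𝒜 * #(∂ 𝒜) :=
        Nat.le_mul_of_pos_right _ (card_pos.2 ⟨_, erase_mem_shadow hs (mem_singleton_self a)⟩)

theorem shadow_slice_subset_slice {𝒢 : Finset (Finset α)} (hdown : ∀ e ∈ 𝒢, ∀ f, f ⊆ e → f ∈ 𝒢)
    (k : ℕ) : ∂ (𝒢 # k) ⊆ 𝒢 # (k - 1) := by
  intro t ht
  obtain ⟨s, hs, a, ha, rfl⟩ := mem_shadow_iff.1 ht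
  obtain ⟨hs𝒢, hsk⟩ := mem_slice.1 hs
  exact mem_slice.2 ⟨hdown s hs𝒢 _ (erase_subset a s), by rw [card_erase_of_mem ha, hsk]⟩

end

end Finset

namespace UV

variable {α : Type*} [DecidableEq α] {𝒜 M : Finset (Finset α)} {s : Finset α} {u v : α}

-- Only the member of `M` containing `u` can lie outside `𝒜`; swapping `u` and `v` moves it in
-- without pushing any other member out.
theorem map_swap_subset_of_subset_compression (hM : M ⊆ 𝓒 {u} {v} 𝒜)
    (hMd : (M : Set (Finset α)).Pairwise Disjoint) {m : Finset α} (hm : m ∈ M) (hm𝒜 : m ∉ 𝒜) :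
    M.map (mapEmbedding (Equiv.swap u v).toEmbedding).toEmbedding ⊆ 𝒜 := by
  have hum : u ∈ m := singleton_subset_iff.1 (le_of_mem_compression_of_notMem (hM hm) hm𝒜)
  have hvm : v ∉ m := disjoint_singleton_left.1 (disjoint_of_mem_compression_of_notMem (hM hm) hm𝒜)
  intro _ hx'
  obtain ⟨x, hx, rfl⟩ := mem_map.1 hx'
  change x.map (Equiv.swap u v).toEmbedding ∈ 𝒜
  by_cases hxm : x = m
  · subst hxm
    rw [map_swap_of_mem_of_notMem hum hvm]
    exact sup_sdiff_mem_of_mem_compression_of_notMem (hM hx) hm𝒜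
  have hux : u ∉ x := disjoint_left.1 (hMd hm hx (Ne.symm hxm)) hum
  by_cases hvx : v ∈ x
  · rw [Equiv.swap_comm, map_swap_of_mem_of_notMem hvx hux]
    exact sup_sdiff_mem_of_mem_compression (hM hx) (singleton_subset_iff.2 hvx)
      (disjoint_singleton_left.2 hux)
  · rw [map_swap_of_notMem_of_notMem hux hvx]
    by_contra hx𝒜
    exact hux (singleton_subset_iff.1 (le_of_mem_compression_of_notMem (hM hx) hx𝒜))

theorem matchingNumber_compression_le (u v : α) (𝒜 : Finset (Finset α)) :
    matchingNumber (𝓒 {u} {v} 𝒜) ≤ matchingNumber 𝒜 := by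
  refine matchingNumber_le_of_forall_exists fun M hM hMd => ?_
  by_cases hM𝒜 : M ⊆ 𝒜
  · exact ⟨M, hM𝒜, hMd, le_rfl⟩
  obtain ⟨m, hm, hm𝒜⟩ := not_subset.1 hM𝒜
  exact ⟨_, map_swap_subset_of_subset_compression hM hMd hm hm𝒜,
    (pairwise_disjoint_map _).2 hMd, (card_map _).ge⟩

theorem card_le_matchingNumber_mul_card_shadow_of_compression (u v : α)
    (h : #(𝓒 {u} {v} 𝒜) ≤ matchingNumber (𝓒 {u} {v} 𝒜) * #(∂ (𝓒 {u} {v} 𝒜))) :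
    #𝒜 ≤ matchingNumber 𝒜 * #(∂ 𝒜) := by
  have hshadow : #(∂ (𝓒 {u} {v} 𝒜)) ≤ #(∂ 𝒜) :=
    card_shadow_compression_le _ _ fun x hx => ⟨v, mem_singleton_self v, by
      rw [mem_singleton.1 hx, erase_singleton, erase_singleton]
      exact isCompressed_self _ _⟩
  calc #𝒜 = #(𝓒 {u} {v} 𝒜) := (card_compression _ _ _).symm
    _ ≤ matchingNumber (𝓒 {u} {v} 𝒜) * #(∂ (𝓒 {u} {v} 𝒜)) := h
    _ ≤ matchingNumber 𝒜 * #(∂ 𝒜) :=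
      Nat.mul_le_mul (matchingNumber_compression_le u v 𝒜) hshadow

theorem insert_mem_of_isCompressed {x y : α} (h : IsCompressed {x} {y} 𝒜) (hxy : x ≠ y)
    (hs : insert y s ∈ 𝒜) (hx : x ∉ s) (hy : y ∉ s) : insert x s ∈ 𝒜 := by
  have := sup_sdiff_mem_of_mem_compression (by rwa [h.eq] : insert y s ∈ 𝓒 {x} {y} 𝒜)
    (singleton_subset_iff.2 (mem_insert_self y s))
    (disjoint_singleton_left.2 (by simp [hxy, hx]))
  convert this using 1
  ext z
  simp only [sup_eq_union, mem_insert, mem_sdiff, mem_union, mem_singleton]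
  grind

end UV

namespace Finset

def weight (𝒜 : Finset (Finset ℕ)) : ℕ := ∑ s ∈ 𝒜, ∑ a ∈ s, a

def IsShifted (𝒜 : Finset (Finset ℕ)) : Prop := ∀ ⦃u v : ℕ⦄, u < v → IsCompressed {u} {v} 𝒜

variable {𝒜 : Finset (Finset ℕ)} {s : Finset ℕ} {k n u v : ℕ}

theorem sum_compress_lt (huv : u < v) (h : compress {u} {v} s ≠ s) :
    ∑ a ∈ compress {u} {v} s, a < ∑ a ∈ s, a := by
  unfold compress at h ⊢
  split_ifs at h ⊢ with hs
  · obtain ⟨hu, hv⟩ := hs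
    rw [disjoint_singleton_left] at hu
    rw [singleton_subset_iff] at hv
    have : (s ⊔ {u}) \ {v} = insert u (s.erase v) := by
      ext x
      simp only [sup_eq_union, mem_sdiff, mem_union, mem_singleton, mem_insert, mem_erase]
      grind
    rw [this, sum_insert (fun h => hu (mem_of_mem_erase h)), ← add_sum_erase s (fun a => a) hv]
    omega
  · exact absurd rfl h

theorem weight_compression_lt (huv : u < v) (h : 𝓒 {u} {v} 𝒜 ≠ 𝒜) :
    weight (𝓒 {u} {v} 𝒜) < weight 𝒜 := by
  rw [compression] at h ⊢
  have hmoved : {s ∈ 𝒜 | compress {u} {v} s ∉ 𝒜}.Nonempty := by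
    refine nonempty_iff_ne_empty.2 fun hempty => h ?_
    have hsplit := filter_union_filter_not_eq (fun s => compress {u} {v} s ∈ 𝒜) 𝒜
    rw [hempty, union_empty] at hsplit
    rw [filter_image, hempty, image_empty, union_empty, hsplit]
  rw [weight, weight, sum_union compress_disjoint]
  conv_rhs => rw [← filter_union_filter_not_eq (fun s => compress {u} {v} s ∈ 𝒜) 𝒜]
  rw [sum_union (disjoint_filter_filter_not _ _ _), add_lt_add_iff_left, filter_image,
    sum_image compress_injOn]
  refine sum_lt_sum_of_nonempty hmoved fun s hs => sum_compress_lt huv fun hfix => ?_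
  rw [mem_filter, hfix] at hs
  exact hs.2 hs.1

theorem subset_range_of_mem_compression (huv : u < v) (h : ∀ s ∈ 𝒜, s ⊆ range n) :
    ∀ s ∈ 𝓒 {u} {v} 𝒜, s ⊆ range n := by
  intro s hs
  rcases mem_compression.1 hs with ⟨hs, -⟩ | ⟨-, b, hb, rfl⟩
  · exact h s hs
  unfold compress
  split_ifs with hcomp
  · intro x hx
    simp only [sup_eq_union, mem_sdiff, mem_union, mem_singleton] at hx
    rcases hx with ⟨hxb | rfl, -⟩
    · exact h b hb hxb
    · exact mem_range.2 (huv.trans (mem_range.1 (h b hb (singleton_subset_iff.1 hcomp.2))))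
  · exact h b hb

theorem subset_range_sub_one (h : s ⊆ range n) (hs : n - 1 ∉ s) : s ⊆ range (n - 1) := by
  intro x hx
  have := mem_range.1 (h hx)
  have : x ≠ n - 1 := fun hx' => hs (hx' ▸ hx)
  exact mem_range.2 (by omega)

theorem card_mul_le_card_shadow_mul_of_subset_range (h𝒜 : (𝒜 : Set (Finset ℕ)).Sized k)
    (hn : ∀ s ∈ 𝒜, s ⊆ range n) : #𝒜 * k ≤ #(∂ 𝒜) * (n - k + 1) := by
  obtain ⟨ℬ, rfl⟩ := exists_eq_map_subtype hn
  have := local_lubell_yamamoto_meshalkin_inequality_mul ((sized_map_iff _).1 h𝒜)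
  simpa [shadow_map] using this

theorem exists_pairwise_disjoint_card_eq_of_subset_memberSubfamily (hsh : IsShifted 𝒜)
    (h𝒜 : (𝒜 : Set (Finset ℕ)).Sized k) (hk : k ≠ 0) {M : Finset (Finset ℕ)}
    (hM : M ⊆ 𝒜.memberSubfamily (n - 1))
    (hMd : (M : Set (Finset ℕ)).Pairwise Disjoint) (hkM : k * #M ≤ n) :
    ∃ M' ⊆ 𝒜, (M' : Set (Finset ℕ)).Pairwise Disjoint ∧ #M' = #M := by
  have hmem : ∀ s ∈ M, insert (n - 1) s ∈ 𝒜 ∧ n - 1 ∉ s :=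
    fun s hs => mem_memberSubfamily.1 (hM hs)
  have hcover : #(M.sup id) ≤ (k - 1) * #M :=
    calc #(M.sup id) ≤ ∑ s ∈ M, #s := by rw [sup_eq_biUnion]; exact card_biUnion_le
      _ = (k - 1) * #M := by
        rw [sum_const_nat fun s hs => h𝒜.memberSubfamily (hM hs), mul_comm]
  have hfree : #M ≤ #(range n \ M.sup id) := by
    have := le_card_sdiff (M.sup id) (range n)
    rw [card_range] at this
    have : (k - 1) * #M + #M = k * #M := by
      rw [← Nat.succ_mul, Nat.succ_eq_add_one, Nat.sub_add_cancel (Nat.one_le_iff_ne_zero.2 hk)]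
    omega
  obtain ⟨φ, hφM, hφ⟩ := M.finite_toSet.exists_injOn_of_encard_le
    (t := ((range n \ M.sup id : Finset ℕ) : Set ℕ)) (by
      rw [Set.encard_coe_eq_coe_finsetCard, Set.encard_coe_eq_coe_finsetCard]
      exact_mod_cast hfree)
  have hφfree : ∀ s ∈ M, φ s < n ∧ ∀ t ∈ M, φ s ∉ t := fun s hs => by
    obtain ⟨hφn, hφs⟩ := mem_sdiff.1 (hφM hs)
    exact ⟨mem_range.1 hφn, fun t ht hφt => hφs (le_sup (f := id) ht hφt)⟩
  refine ⟨_, ?_, pairwise_disjoint_image_insert hMd hφ fun s hs => (hφfree s hs).2⟩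
  intro _ h
  obtain ⟨s, hs, rfl⟩ := mem_image.1 h
  obtain ⟨hφn, hφs⟩ := hφfree s hs
  obtain hlast | hlt : φ s = n - 1 ∨ φ s < n - 1 := by omega
  · exact hlast ▸ (hmem s hs).1
  · exact insert_mem_of_isCompressed (hsh hlt) hlt.ne (hmem s hs).1 (hφs s hs) (hmem s hs).2

theorem matchingNumber_memberSubfamily_le (hsh : IsShifted 𝒜)
    (h𝒜 : (𝒜 : Set (Finset ℕ)).Sized k) (hk : k ≠ 0)
    (hkn : k * (matchingNumber 𝒜 + 1) ≤ n) :
    matchingNumber (𝒜.memberSubfamily (n - 1)) ≤ matchingNumber 𝒜 := by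
  by_contra! hlt
  obtain ⟨M, hM, hMd, hMcard⟩ := exists_card_eq_matchingNumber (𝒜.memberSubfamily (n - 1))
  obtain ⟨M₀, hM₀, hM₀card⟩ := exists_subset_card_eq (show matchingNumber 𝒜 + 1 ≤ #M by omega)
  obtain ⟨M', hM'𝒜, hM'd, hM'card⟩ :=
    exists_pairwise_disjoint_card_eq_of_subset_memberSubfamily hsh h𝒜 hk (hM₀.trans hM)
      (hMd.mono (coe_subset.2 hM₀)) (hM₀card ▸ hkn)
  have := card_le_matchingNumber hM'𝒜 hM'd
  omega

theorem card_le_matchingNumber_mul_card_shadow_of_lt (h𝒜 : (𝒜 : Set (Finset ℕ)).Sized k)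
    (hk : k ≠ 0) (hn : ∀ s ∈ 𝒜, s ⊆ range n) (hsmall : n < k * (matchingNumber 𝒜 + 1)) :
    #𝒜 ≤ matchingNumber 𝒜 * #(∂ 𝒜) := by
  rcases 𝒜.eq_empty_or_nonempty with rfl | h𝒜ne
  · simp
  have hkν : k ≤ k * matchingNumber 𝒜 := Nat.le_mul_of_pos_right k (one_le_matchingNumber h𝒜ne)
  have : n - k + 1 ≤ k * matchingNumber 𝒜 := by
    rw [Nat.mul_succ] at hsmall
    omega
  refine Nat.le_of_mul_le_mul_right ?_ (Nat.pos_of_ne_zero hk)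
  calc #𝒜 * k ≤ #(∂ 𝒜) * (n - k + 1) := card_mul_le_card_shadow_mul_of_subset_range h𝒜 hn
    _ ≤ #(∂ 𝒜) * (k * matchingNumber 𝒜) := Nat.mul_le_mul_left _ this
    _ = matchingNumber 𝒜 * #(∂ 𝒜) * k := by ring

theorem card_le_matchingNumber_mul_card_shadow_of_isShifted (hsh : IsShifted 𝒜)
    (h𝒜 : (𝒜 : Set (Finset ℕ)).Sized k) (hk : k ≠ 0) (hn : ∀ s ∈ 𝒜, s ⊆ range n)
    (ih : ∀ m < n, ∀ {ℬ : Finset (Finset ℕ)} {k}, (ℬ : Set (Finset ℕ)).Sized k → k ≠ 0 →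
      (∀ s ∈ ℬ, s ⊆ range m) → #ℬ ≤ matchingNumber ℬ * #(∂ ℬ)) :
    #𝒜 ≤ matchingNumber 𝒜 * #(∂ 𝒜) := by
  obtain rfl | hk2 : k = 1 ∨ 2 ≤ k := by omega
  · exact card_le_matchingNumber_mul_card_shadow_of_sized_one h𝒜
  rcases lt_or_ge n (k * (matchingNumber 𝒜 + 1)) with hsmall | hsmall
  · exact card_le_matchingNumber_mul_card_shadow_of_lt h𝒜 hk hn hsmall
  have hn1 : n - 1 < n := by
    have : 0 < k * (matchingNumber 𝒜 + 1) := Nat.mul_pos (by omega) (by omega)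
    omega
  set L := 𝒜.memberSubfamily (n - 1)
  set 𝒜₀ := 𝒜.nonMemberSubfamily (n - 1)
  have hL := ih (n - 1) hn1 (h𝒜.memberSubfamily (a := n - 1)) (by omega) fun s hs =>
    subset_range_sub_one ((subset_insert _ _).trans (hn _ (mem_memberSubfamily.1 hs).1))
      (mem_memberSubfamily.1 hs).2
  have h𝒜₀ := ih (n - 1) hn1 (h𝒜.mono (coe_subset.2 (filter_subset _ _))) hk fun s hs =>
    subset_range_sub_one (hn _ (mem_nonMemberSubfamily.1 hs).1) (mem_nonMemberSubfamily.1 hs).2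
  have hνL := matchingNumber_memberSubfamily_le hsh h𝒜 hk hsmall
  have hν𝒜₀ : matchingNumber 𝒜₀ ≤ matchingNumber 𝒜 := matchingNumber_mono (filter_subset _ _)
  calc #𝒜 = #L + #𝒜₀ := (card_memberSubfamily_add_card_nonMemberSubfamily _ _).symm
    _ ≤ matchingNumber L * #(∂ L) + matchingNumber 𝒜₀ * #(∂ 𝒜₀) := add_le_add hL h𝒜₀
    _ ≤ matchingNumber 𝒜 * #(∂ L) + matchingNumber 𝒜 * #(∂ 𝒜₀) :=
      add_le_add (Nat.mul_le_mul_right _ hνL) (Nat.mul_le_mul_right _ hν𝒜₀)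
    _ = matchingNumber 𝒜 * (#(∂ 𝒜₀) + #(∂ L)) := by ring
    _ ≤ matchingNumber 𝒜 * #(∂ 𝒜) := Nat.mul_le_mul_left _
      (card_shadow_nonMemberSubfamily_add_card_shadow_memberSubfamily_le _ _)

theorem card_le_matchingNumber_mul_card_shadow_of_subset_range
    (h𝒜 : (𝒜 : Set (Finset ℕ)).Sized k) (hk : k ≠ 0) (hn : ∀ s ∈ 𝒜, s ⊆ range n) :
    #𝒜 ≤ matchingNumber 𝒜 * #(∂ 𝒜) := by
  induction n using Nat.strong_induction_on generalizing k 𝒜 with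
  | _ n ihn =>
  induction hw : weight 𝒜 using Nat.strong_induction_on generalizing 𝒜 with
  | _ w ihw =>
  by_cases hsh : IsShifted 𝒜
  · exact card_le_matchingNumber_mul_card_shadow_of_isShifted hsh h𝒜 hk hn ihn
  obtain ⟨u, v, huv, hcomp⟩ : ∃ u v, u < v ∧ 𝓒 {u} {v} 𝒜 ≠ 𝒜 := by
    simpa [IsShifted, IsCompressed] using hsh
  exact card_le_matchingNumber_mul_card_shadow_of_compression u v
    (ihw _ (hw ▸ weight_compression_lt huv hcomp) (h𝒜.uvCompression rfl)
      (subset_range_of_mem_compression huv hn) rfl)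

theorem card_le_matchingNumber_mul_card_shadow {α : Type*} [DecidableEq α] {k : ℕ}
    {𝒜 : Finset (Finset α)} (h𝒜 : (𝒜 : Set (Finset α)).Sized k) (hk : k ≠ 0) :
    #𝒜 ≤ matchingNumber 𝒜 * #(∂ 𝒜) := by
  obtain ⟨ℬ, h𝒜ℬ⟩ := exists_eq_map_subtype (s := 𝒜.sup id) fun s hs => le_sup (f := id) hs
  rw [h𝒜ℬ, sized_map_iff] at h𝒜
  rw [h𝒜ℬ]
  let g : ↥(𝒜.sup id) ↪ ℕ := (Fintype.equivFin _).toEmbedding.trans Fin.valEmbedding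
  obtain ⟨n, hn⟩ := ((ℬ.map (mapEmbedding g).toEmbedding).sup id).exists_nat_subset_range
  have := card_le_matchingNumber_mul_card_shadow_of_subset_range ((sized_map_iff g).2 h𝒜) hk
    fun s hs => (show s ⊆ _ from le_sup (f := id) hs).trans hn
  simpa [shadow_map, matchingNumber_map] using this

end Finset

theorem matching_of_ratio_general (k r : ℕ) (𝒢 : Finset (Finset V))
    (hdown : ∀ e ∈ 𝒢, ∀ f, f ⊆ e → f ∈ 𝒢)
    (hcount : (r - 1) * ecount 𝒢 (k - 1) + 1 ≤ ecount 𝒢 k) :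
    ∃ M : Finset (Finset V), M ⊆ 𝒢 ∧ (∀ e ∈ M, e.card = k) ∧
      (∀ e ∈ M, ∀ f ∈ M, e ≠ f → Disjoint e f) ∧ r ≤ M.card := by
  obtain ⟨M, hM, hMd, hMcard⟩ := exists_card_eq_matchingNumber (𝒢 # k)
  refine ⟨M, hM.trans (filter_subset _ _), fun e he => (mem_slice.1 (hM he)).2, hMd, ?_⟩
  change (r - 1) * #(𝒢 # (k - 1)) < #(𝒢 # k) at hcount
  suffices h : #(𝒢 # k) ≤ matchingNumber (𝒢 # k) * #(𝒢 # (k - 1)) by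
    have := Nat.lt_of_mul_lt_mul_right (hcount.trans_le h)
    omega
  rcases Nat.eq_zero_or_pos k with rfl | hk
  · calc #(𝒢 # 0) ≤ matchingNumber (𝒢 # 0) :=
          card_le_matchingNumber subset_rfl
            (pairwise_disjoint_of_sized_le_one sized_slice zero_le_one)
      _ ≤ matchingNumber (𝒢 # 0) * #(𝒢 # (0 - 1)) :=
          Nat.le_mul_of_pos_right _ (Nat.zero_lt_of_lt hcount)
  · calc #(𝒢 # k) ≤ matchingNumber (𝒢 # k) * #(∂ (𝒢 # k)) :=
          card_le_matchingNumber_mul_card_shadow sized_slice hk.ne'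
      _ ≤ matchingNumber (𝒢 # k) * #(𝒢 # (k - 1)) :=
          Nat.mul_le_mul_left _ (card_le_card (shadow_slice_subset_slice hdown k))

/-- If a `k`-complex `𝒢` satisfies `e_k(𝒢) ≥ (r-1)·e_{k-1}(𝒢) + 1`,
then its `k`-uniform level contains a matching of size at least `r`. -/
theorem matching_of_ratio (k r : ℕ) (𝒢 : Finset (Finset V))
    (hdown : ∀ e ∈ 𝒢, ∀ f, f ⊆ e → f ∈ 𝒢)
    (hbound : ∀ e ∈ 𝒢, e.card ≤ k)
    (hcount : (r - 1) * ecount 𝒢 (k - 1) + 1 ≤ ecount 𝒢 k) :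
    ∃ M : Finset (Finset V), M ⊆ 𝒢 ∧ (∀ e ∈ M, e.card = k) ∧
      (∀ e ∈ M, ∀ f ∈ M, e ≠ f → Disjoint e f) ∧ r ≤ M.card :=
  matching_of_ratio_general k r 𝒢 hdown hcount
end

section
/- Let ℋ be a fully-compressed k-complex on vertex set [n] such that for every 1 ≤ ℓ ≤ k-1, every edge of ℋ^(ℓ) is contained in at least (k-ℓ)·r edges of ℋ^(ℓ+1), and such that the vertices (k-1)r+1, ..., kr are all singleton edges of ℋ. Then for every 1 ≤ ℓ ≤ k and every m ∈ [r], the set e_{ℓ,m} := {(k-ℓ)r+m, (k-ℓ+1)r+m, ..., (k-1)r+m} is an edge of ℋ^(ℓ); in particular, ℋ^(k) contains a matching of size r. -/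
open Finset

/-- The `ij`-compression of a hypergraph: every edge `e` with `j ∈ e`, `i ∉ e` and
`{i} ∪ e \ {j} ∉ H` is replaced by `{i} ∪ e \ {j}`. -/
def compress (i j : ℕ) (H : Finset (Finset ℕ)) : Finset (Finset ℕ) :=
  H.image fun e =>
    if j ∈ e ∧ i ∉ e ∧ insert i (e.erase j) ∉ H then insert i (e.erase j) else e

lemma key_arith {r : ℕ} {s s' m m' : ℕ} (hm : 1 ≤ m) (hmr : m ≤ r)
    (hm' : 1 ≤ m') (hmr' : m' ≤ r) (h : s * r + m = s' * r + m') : s = s' ∧ m = m' := by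
  rcases lt_trichotomy s s' with hs | hs | hs
  · have h1 : (s + 1) * r ≤ s' * r := Nat.mul_le_mul_right r hs
    have h2 : s * r + r = (s + 1) * r := (Nat.succ_mul s r).symm
    exfalso; linarith
  · subst hs
    exact ⟨rfl, Nat.add_left_cancel h⟩
  · have h1 : (s' + 1) * r ≤ s * r := Nat.mul_le_mul_right r hs
    have h2 : s' * r + r = (s' + 1) * r := (Nat.succ_mul s' r).symm
    exfalso; linarith

/-- Let `ℋ` be a fully-compressed `k`-complex on the vertex set
`[n] = {1,…,n}` such that every `ℓ`-edge (`1 ≤ ℓ ≤ k-1`) lies in at least `(k-ℓ)·r`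
`(ℓ+1)`-edges, and such that the vertices `(k-1)r+1, …, kr` are singleton edges. Then for
all `1 ≤ ℓ ≤ k` and `m ∈ [r]` the set
`e_{ℓ,m} = {(k-ℓ)r+m, (k-ℓ+1)r+m, …, (k-1)r+m}` is an edge of `ℋ`; in particular `ℋ^(k)`
contains a matching of size `r`. -/
theorem compressed_matching (n k r : ℕ) (hk : 1 ≤ k) (hr : 1 ≤ r) (hkr : k * r ≤ n)
    (ℋ : Finset (Finset ℕ))
    (hdown : ∀ e ∈ ℋ, ∀ f, f ⊆ e → f ∈ ℋ)
    (hbound : ∀ e ∈ ℋ, e.card ≤ k)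
    (hvert : ∀ e ∈ ℋ, ∀ v ∈ e, 1 ≤ v ∧ v ≤ n)
    (hcomp : ∀ i j : ℕ, 1 ≤ i → i < j → j ≤ n → compress i j ℋ = ℋ)
    (hdeg : ∀ ℓ, 1 ≤ ℓ → ℓ ≤ k - 1 → ∀ e ∈ ℋ, e.card = ℓ →
      (k - ℓ) * r ≤ (ℋ.filter fun f => f.card = ℓ + 1 ∧ e ⊆ f).card)
    (hsing : ∀ m, 1 ≤ m → m ≤ r → ({(k - 1) * r + m} : Finset ℕ) ∈ ℋ) :
    (∀ ℓ m, 1 ≤ ℓ → ℓ ≤ k → 1 ≤ m → m ≤ r →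
      ((Finset.range ℓ).image fun s => (k - ℓ + s) * r + m) ∈ ℋ) ∧
    ∃ M : Finset (Finset ℕ), M ⊆ ℋ ∧ (∀ e ∈ M, e.card = k) ∧
      (∀ e ∈ M, ∀ f ∈ M, e ≠ f → Disjoint e f) ∧ M.card = r := by
  -- the shift (compression) lemma
  have shift : ∀ e : Finset ℕ, ∀ j, insert j e ∈ ℋ → j ∉ e → ∀ i, 1 ≤ i → i < j → i ∉ e →
      insert i e ∈ ℋ := by
    intro e j hje hj i hi1 hij hie
    by_cases hmem : insert i e ∈ ℋ
    · exact hmem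
    · exfalso
      have hjn : j ≤ n := (hvert _ hje j (mem_insert_self j e)).2
      have heq := hcomp i j hi1 hij hjn
      have hine : i ∉ insert j e := by
        simp only [mem_insert]
        push_neg
        exact ⟨Nat.ne_of_lt hij, hie⟩
      have herase : (insert j e).erase j = e := by
        rw [erase_insert hj]
      apply hmem
      rw [← heq]
      rw [compress, mem_image]
      refine ⟨insert j e, hje, ?_⟩
      rw [if_pos ⟨mem_insert_self j e, hine, by rw [herase]; exact hmem⟩, herase]
  -- part 1 by induction
  have main : ∀ ℓ, 1 ≤ ℓ → ℓ ≤ k → ∀ m, 1 ≤ m → m ≤ r →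
      ((Finset.range ℓ).image fun s => (k - ℓ + s) * r + m) ∈ ℋ := by
    intro ℓ hℓ1
    induction ℓ, hℓ1 using Nat.le_induction with
    | base =>
      intro _ m hm hmr
      have : ((Finset.range 1).image fun s => (k - 1 + s) * r + m) = {(k - 1) * r + m} := by
        simp
      rw [this]
      exact hsing m hm hmr
    | succ ℓ hℓ ih =>
      intro hℓk m hm hmr
      have hℓk' : ℓ ≤ k := by omega
      have he : ((Finset.range ℓ).image fun s => (k - ℓ + s) * r + m) ∈ ℋ :=
        ih hℓk' m hm hmr
      set e : Finset ℕ := (Finset.range ℓ).image fun s => (k - ℓ + s) * r + m with hedef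
      set i : ℕ := (k - (ℓ + 1)) * r + m with hidef
      have hi1 : 1 ≤ i := by have : 1 ≤ m := hm; omega
      -- membership description of e
      have hememb : ∀ x, x ∈ e ↔ ∃ s < ℓ, (k - ℓ + s) * r + m = x := by
        intro x; simp [hedef, mem_image]
      -- i ∉ e
      have hie : i ∉ e := by
        rw [hememb]
        rintro ⟨s, hs, hx⟩
        have h1 : k - (ℓ + 1) < k - ℓ + s := by omega
        have h2 : (k - (ℓ + 1)) * r < (k - ℓ + s) * r :=
          (Nat.mul_lt_mul_right hr).mpr h1
        omega
      -- card of e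
      have hecard : e.card = ℓ := by
        rw [hedef, card_image_of_injOn, card_range]
        intro s hs s' hs' hss
        simp only [mem_coe, mem_range] at hs hs'
        have := (key_arith hm hmr hm hmr hss).1
        omega
      -- degree condition
      have hdeg' := hdeg ℓ hℓ (by omega) e he hecard
      -- claim: insert i e ∈ ℋ
      have hkey : insert i e ∈ ℋ := by
        by_contra hni
        have hsubim : (ℋ.filter fun f => f.card = ℓ + 1 ∧ e ⊆ f) ⊆
            (Finset.Ico 1 i).image fun v => insert v e := by
          intro f hf
          simp only [mem_filter] at hf
          obtain ⟨hfH, hfcard, hef⟩ := hf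
          have hsd : (f \ e).card = 1 := by
            rw [card_sdiff_of_subset hef, hfcard, hecard]; omega
          obtain ⟨v, hv⟩ := card_eq_one.mp hsd
          have hve : v ∉ e := by
            have : v ∈ f \ e := hv ▸ mem_singleton_self v
            exact (mem_sdiff.mp this).2
          have hvf : v ∈ f := by
            have : v ∈ f \ e := hv ▸ mem_singleton_self v
            exact (mem_sdiff.mp this).1
          have hfv : f = insert v e := by
            have h1 : e ∪ f \ e = f := union_sdiff_of_subset hef
            rw [hv] at h1
            rw [← h1]
            ext x; simp [mem_insert, or_comm]
          have hv1 : 1 ≤ v := (hvert f hfH v hvf).1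
          have hvlt : v < i := by
            rcases lt_trichotomy v i with h | h | h
            · exact h
            · exfalso; apply hni; rw [← h, ← hfv]; exact hfH
            · exfalso; apply hni
              exact shift e v (hfv ▸ hfH) hve i hi1 h hie
          rw [mem_image]
          exact ⟨v, mem_Ico.mpr ⟨hv1, hvlt⟩, hfv.symm⟩
        have hle := card_le_card hsubim
        have him : ((Finset.Ico 1 i).image fun v => insert v e).card ≤ i - 1 := by
          calc ((Finset.Ico 1 i).image fun v => insert v e).card ≤ (Finset.Ico 1 i).card :=
              card_image_le
            _ = i - 1 := by rw [Nat.card_Ico]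
        have hi_le : i ≤ (k - ℓ) * r := by
          have h2 : (k - (ℓ + 1)) * r + r = (k - (ℓ + 1) + 1) * r := (Nat.succ_mul _ r).symm
          have h3 : k - (ℓ + 1) + 1 = k - ℓ := by omega
          rw [h3] at h2
          omega
        omega
      -- identify insert i e with the ℓ+1 image
      have hfinal : ((Finset.range (ℓ + 1)).image fun s => (k - (ℓ + 1) + s) * r + m) =
          insert i e := by
        ext x
        simp only [mem_image, mem_range, mem_insert, hememb, hidef]
        constructor
        · rintro ⟨s, hs, rfl⟩
          rcases Nat.eq_zero_or_pos s with h0 | h0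
          · left; rw [h0]; ring_nf
          · right
            refine ⟨s - 1, by omega, ?_⟩
            have : k - ℓ + (s - 1) = k - (ℓ + 1) + s := by omega
            rw [this]
        · rintro (rfl | ⟨s, hs, rfl⟩)
          · exact ⟨0, by omega, rfl⟩
          · refine ⟨s + 1, by omega, ?_⟩
            have : k - (ℓ + 1) + (s + 1) = k - ℓ + s := by omega
            rw [this]
      rw [hfinal]
      exact hkey
  refine ⟨fun ℓ m h1 h2 h3 h4 => main ℓ h1 h2 m h3 h4, ?_⟩
  -- the matching
  refine ⟨(Finset.Icc 1 r).image fun m => (Finset.range k).image fun s => (k - k + s) * r + m,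
    ?_, ?_, ?_, ?_⟩
  · intro f hf
    rw [mem_image] at hf
    obtain ⟨m, hm, rfl⟩ := hf
    rw [mem_Icc] at hm
    exact main k hk le_rfl m hm.1 hm.2
  · intro f hf
    rw [mem_image] at hf
    obtain ⟨m, hm, rfl⟩ := hf
    rw [mem_Icc] at hm
    rw [card_image_of_injOn, card_range]
    intro s hs s' hs' hss
    simp only [mem_coe, mem_range] at hs hs'
    simp only [Nat.sub_self, Nat.zero_add] at hss
    exact (key_arith hm.1 hm.2 hm.1 hm.2 hss).1
  · intro f hf g hg hfg
    rw [mem_image] at hf hg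
    obtain ⟨m, hm, rfl⟩ := hf
    obtain ⟨m', hm', rfl⟩ := hg
    rw [mem_Icc] at hm hm'
    rw [disjoint_left]
    intro x hx hx'
    simp only [mem_image, mem_range, Nat.sub_self, Nat.zero_add] at hx hx'
    obtain ⟨s, hs, rfl⟩ := hx
    obtain ⟨s', hs', heq⟩ := hx'
    have := (key_arith hm'.1 hm'.2 hm.1 hm.2 heq).2
    exact hfg (by rw [this])
  · rw [card_image_of_injOn, Nat.card_Icc]
    · omega
    · intro m hm m' hm' hmm
      simp only [mem_coe, mem_Icc] at hm hm'
      have h1 : m ∈ (Finset.range k).image fun s => (k - k + s) * r + m := by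
        rw [mem_image]
        exact ⟨0, mem_range.mpr hk, by simp⟩
      dsimp only at hmm
      rw [hmm, mem_image] at h1
      obtain ⟨s, hs, heq⟩ := h1
      simp only [Nat.sub_self, Nat.zero_add] at heq
      have heq' : s * r + m' = 0 * r + m := by omega
      exact ((key_arith hm'.1 hm'.2 hm.1 hm.2 heq').2).symm
end

section
/- Let 𝒢 be a k-uniform hypergraph on n vertices with e(𝒢) ≥ (α + δ)·binom(n,k) for some α, δ > 0. Then there exists a tight component G* of 𝒢 whose down-closure 𝒢* satisfies e_k(𝒢*) ≥ (α + δ) · e_{k-1}(𝒢*) · binom(n,k)/binom(n,k-1). -/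
open Finset

variable {V : Type*} [DecidableEq V]

/-- auxiliary step relation -/
def TStep (G : Finset (Finset V)) (k : ℕ) (a b : Finset V) : Prop :=
  b ∈ G ∧ k - 1 ≤ (a ∩ b).card

lemma nodup_of_card_toFinset {l : List V} (h : l.toFinset.card = l.length) : l.Nodup := by
  rw [List.card_toFinset] at h
  have hsub : l.dedup.Sublist l := List.dedup_sublist l
  have := hsub.eq_of_length h
  rw [← List.dedup_eq_self]; exact this

lemma window_nodup {G : Finset (Finset V)} {k : ℕ} (hG : ∀ e ∈ G, e.card = k)
    {l : List V} (hl : l.length = k) (hmem : l.toFinset ∈ G) : l.Nodup :=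
  nodup_of_card_toFinset (by rw [hG _ hmem, hl])

lemma walk_rtg {G : Finset (Finset V)} {k : ℕ} (hk : 1 ≤ k) (hG : ∀ e ∈ G, e.card = k)
    {W : List V} (hW : IsTightWalk G k W) :
    ∀ i, i + k ≤ W.length →
      Relation.ReflTransGen (TStep G k) (W.take k).toFinset (((W.drop i).take k).toFinset) := by
  intro i
  induction i with
  | zero => intro _; simpa using Relation.ReflTransGen.refl
  | succ i ih =>
    intro hik
    have hik' : i + k ≤ W.length := by omega
    have h1 := ih hik'
    refine h1.tail ?_
    have hmem : ((W.drop (i+1)).take k).toFinset ∈ G := hW.2 (i+1) hik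
    refine ⟨hmem, ?_⟩
    set T : Finset V := ((W.drop (i+1)).take (k-1)).toFinset with hT
    have hilt : i < W.length := by omega
    have hsplit : (W.drop i).take k = W[i] :: (W.drop (i+1)).take (k-1) := by
      obtain ⟨m, hm⟩ : ∃ m, k = m + 1 := ⟨k - 1, by omega⟩
      subst hm
      rw [List.drop_eq_getElem_cons hilt, List.take_succ_cons]
      simp
    have hT1 : T ⊆ ((W.drop i).take k).toFinset := by
      rw [hsplit]; intro x hx
      simp only [List.toFinset_cons, Finset.mem_insert]
      right; exact hx
    have hT2 : T ⊆ ((W.drop (i+1)).take k).toFinset := by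
      intro x hx
      rw [List.mem_toFinset] at hx ⊢
      have : (W.drop (i+1)).take (k-1) = ((W.drop (i+1)).take k).take (k-1) := by
        rw [List.take_take, min_eq_left (by omega)]
      rw [this] at hx
      exact List.take_subset _ _ hx
    have hlen : ((W.drop (i+1)).take k).length = k := by
      rw [List.length_take, List.length_drop]; omega
    have hnd : ((W.drop (i+1)).take k).Nodup := window_nodup hG hlen hmem
    have hndT : ((W.drop (i+1)).take (k-1)).Nodup := by
      have : (W.drop (i+1)).take (k-1) = ((W.drop (i+1)).take k).take (k-1) := by
        rw [List.take_take, min_eq_left (by omega)]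
      rw [this]; exact hnd.sublist (List.take_sublist _ _)
    have hcardT : T.card = k - 1 := by
      rw [hT, List.toFinset_card_of_nodup hndT, List.length_take, List.length_drop]
      omega
    calc k - 1 = T.card := hcardT.symm
      _ ≤ _ := Finset.card_le_card (Finset.subset_inter hT1 hT2)

lemma tc_to_rtg {G : Finset (Finset V)} {k : ℕ} (hk : 1 ≤ k) (hG : ∀ e ∈ G, e.card = k)
    {e f : Finset V} (h : TightlyConnected G k e f) :
    e ∈ G ∧ f ∈ G ∧ Relation.ReflTransGen (TStep G k) e f := by
  obtain ⟨W, hW, he, hf⟩ := h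
  have hkW : k ≤ W.length := hW.1
  have he' : e ∈ G := by
    rw [← he]
    have := hW.2 0 (by omega)
    simpa using this
  have hlast : W.reverse.take k = (W.drop (W.length - k)).reverse := by
    have h1 : (W.reverse.take k).reverse = W.reverse.reverse.drop (W.reverse.length - k) := by
      rw [List.reverse_take]
    rw [List.reverse_reverse, List.length_reverse] at h1
    rw [← List.reverse_reverse (W.reverse.take k), h1]
  have hdroplen : (W.drop (W.length - k)).length = k := by
    rw [List.length_drop]; omega
  have hfwin : f = ((W.drop (W.length - k)).take k).toFinset := by
    rw [← hf, hlast, List.toFinset_reverse, List.take_of_length_le (by omega)]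
  have hrtg := walk_rtg hk hG hW (W.length - k) (by omega)
  rw [he] at hrtg
  refine ⟨he', ?_, ?_⟩
  · rw [hfwin]; exact hW.2 _ (by omega)
  · rw [hfwin]; exact hrtg

lemma lastk_reverse_take {W : List V} {m : ℕ} (hm : m ≤ W.length) :
    W.reverse.take m = (W.drop (W.length - m)).reverse := by
  have h1 : (W.reverse.take m).reverse = W.reverse.reverse.drop (W.reverse.length - m) := by
    rw [List.reverse_take]
  rw [List.reverse_reverse, List.length_reverse] at h1
  rw [← List.reverse_reverse (W.reverse.take m), h1]

lemma ext_one {G : Finset (Finset V)} {k : ℕ} (hk : 1 ≤ k) {W : List V}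
    (hW : IsTightWalk G k W) {v : V}
    (hv : (v :: W.reverse.take (k-1)).toFinset ∈ G) :
    IsTightWalk G k (W ++ [v]) := by
  have hkW : k ≤ W.length := hW.1
  constructor
  · rw [List.length_append]; simp; omega
  · intro i hik
    rw [List.length_append, List.length_singleton] at hik
    have hiW : i ≤ W.length := by omega
    rw [List.drop_append_of_le_length hiW]
    by_cases hcase : i + k ≤ W.length
    · rw [List.take_append_of_le_length (by rw [List.length_drop]; omega)]
      exact hW.2 i hcase
    · -- i + k = W.length + 1
      have hieq : i = W.length + 1 - k := by omega
      have hlen : (W.drop i).length = k - 1 := by rw [List.length_drop]; omega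
      rw [List.take_of_length_le (by rw [List.length_append, hlen]; simp; omega)]
      have hdrop : W.drop i = (W.reverse.take (k-1)).reverse := by
        rw [lastk_reverse_take (by omega), List.reverse_reverse, hieq]
        congr 1; omega
      have : ((W.drop i) ++ [v]).toFinset = (v :: W.reverse.take (k-1)).toFinset := by
        rw [hdrop]
        ext x
        simp [List.mem_reverse, or_comm]
      rw [this]; exact hv

lemma last_window_mem {G : Finset (Finset V)} {k : ℕ} {W : List V}
    (hW : IsTightWalk G k W) : (W.reverse.take k).toFinset ∈ G := by
  have hkW : k ≤ W.length := hW.1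
  rw [lastk_reverse_take hkW, List.toFinset_reverse]
  have hlen : (W.drop (W.length - k)).length = k := by rw [List.length_drop]; omega
  have := hW.2 (W.length - k) (by omega)
  rwa [List.take_of_length_le (by omega)] at this

lemma extend_rot {G : Finset (Finset V)} {k : ℕ} (hk : 1 ≤ k) {W : List V}
    (hW : IsTightWalk G k W) :
    ∀ j, ∃ W' : List V, IsTightWalk G k W' ∧ W'.take k = W.take k ∧
      (W'.reverse.take k).reverse = ((W.reverse.take k).reverse).rotate j := by
  intro j
  induction j with
  | zero => exact ⟨W, hW, rfl, by rw [List.rotate_zero]⟩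
  | succ j ih =>
    obtain ⟨W', hW', htake, hrot⟩ := ih
    set A : List V := (W'.reverse.take k).reverse with hA
    have hkW' : k ≤ W'.length := hW'.1
    have hAlen : A.length = k := by
      rw [hA, List.length_reverse, List.length_take, List.length_reverse]; omega
    have hAne : A ≠ [] := by
      intro h; rw [h] at hAlen; simp at hAlen; omega
    set v : V := A.head hAne with hv
    have hAset : A.toFinset ∈ G := by
      rw [hA, List.toFinset_reverse]; exact last_window_mem hW'
    obtain ⟨a, t, hat⟩ : ∃ a t, A = a :: t := List.exists_cons_of_ne_nil hAne
    have hvA : v = a := by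
      have h1 : A.head? = some a := by rw [hat]; rfl
      rw [List.head?_eq_head hAne] at h1
      exact hv.trans (Option.some.inj h1)
    have hBlen : (W'.reverse.take k).length = k := by
      rw [List.length_take, List.length_reverse]; omega
    have hdrop1 : W'.reverse.take (k-1) = (A.drop 1).reverse := by
      have h3 : ((W'.reverse.take k).take (k-1)).reverse
          = ((W'.reverse.take k).reverse).drop ((W'.reverse.take k).length - (k-1)) :=
        List.reverse_take
      rw [List.take_take, min_eq_left (by omega), hBlen] at h3
      have h4 : (W'.reverse.take k).reverse = A := hA.symm
      rw [h4] at h3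
      have h5 : k - (k - 1) = 1 := by omega
      rw [h5] at h3
      rw [← h3, List.reverse_reverse]
    have hrot1 : A.drop 1 ++ [v] = A.rotate 1 := by
      rw [List.rotate_eq_drop_append_take (by omega)]
      congr 1
      rw [hat, hvA]; rfl
    have hvmem : (v :: W'.reverse.take (k-1)).toFinset ∈ G := by
      have heq : (v :: W'.reverse.take (k-1)).toFinset = (A.rotate 1).toFinset := by
        rw [hdrop1, ← hrot1]
        ext x; simp [or_comm]
      have heq2 : (A.rotate 1).toFinset = A.toFinset := by
        ext x; simp [List.mem_rotate]
      rw [heq, heq2]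
      exact hAset
    refine ⟨W' ++ [v], ext_one hk hW' hvmem, ?_, ?_⟩
    · rw [List.take_append_of_le_length hkW', htake]
    · have hltk : (W' ++ [v]).reverse.take k = v :: W'.reverse.take (k-1) := by
        rw [List.reverse_append]
        simp only [List.reverse_singleton, List.singleton_append]
        obtain ⟨m, hm⟩ : ∃ m, k = m + 1 := ⟨k - 1, by omega⟩
        subst hm
        rw [List.take_succ_cons]; simp
      rw [hltk]
      simp only [List.reverse_cons]
      rw [hdrop1, List.reverse_reverse, hrot1, hrot, List.rotate_rotate]

lemma extend_edge {G : Finset (Finset V)} {k : ℕ} (hk : 1 ≤ k) (hG : ∀ e ∈ G, e.card = k)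
    {W : List V} (hW : IsTightWalk G k W) {f g : Finset V}
    (hf : (W.reverse.take k).toFinset = f) (hg : g ∈ G) (hcard : k - 1 ≤ (f ∩ g).card) :
    ∃ W' : List V, IsTightWalk G k W' ∧ W'.take k = W.take k ∧
      (W'.reverse.take k).toFinset = g := by
  by_cases hfg : f = g
  · exact ⟨W, hW, rfl, hf.trans hfg⟩
  have hfG : f ∈ G := hf ▸ last_window_mem hW
  have hcf : f.card = k := hG f hfG
  have hcg : g.card = k := hG g hg
  have hcap : (f ∩ g).card = k - 1 := by
    rcases Nat.lt_or_ge (f ∩ g).card k with h | h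
    · omega
    · exfalso
      have h1 : f ∩ g = f := Finset.eq_of_subset_of_card_le (Finset.inter_subset_left) (by omega)
      have h2 : f ⊆ g := by rw [← h1]; exact Finset.inter_subset_right
      exact hfg (Finset.eq_of_subset_of_card_le h2 (by omega))
  have hsdf : (f \ g).card = 1 := by
    have := Finset.card_inter_add_card_sdiff f g
    omega
  have hsdg : (g \ f).card = 1 := by
    have := Finset.card_inter_add_card_sdiff g f
    rw [Finset.inter_comm] at this
    omega
  obtain ⟨x, hx⟩ := Finset.card_eq_one.1 hsdf
  obtain ⟨y, hy⟩ := Finset.card_eq_one.1 hsdg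
  have hxf : x ∈ f := by
    have : x ∈ f \ g := hx ▸ Finset.mem_singleton_self x
    exact (Finset.mem_sdiff.1 this).1
  have hxg : x ∉ g := by
    have : x ∈ f \ g := hx ▸ Finset.mem_singleton_self x
    exact (Finset.mem_sdiff.1 this).2
  have hyg : y ∈ g := by
    have : y ∈ g \ f := hy ▸ Finset.mem_singleton_self y
    exact (Finset.mem_sdiff.1 this).1
  have hyf : y ∉ f := by
    have : y ∈ g \ f := hy ▸ Finset.mem_singleton_self y
    exact (Finset.mem_sdiff.1 this).2
  -- the last k vertices of W, in order
  have hkW : k ≤ W.length := hW.1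
  set A0 : List V := (W.reverse.take k).reverse with hA0
  have hA0len : A0.length = k := by
    rw [hA0, List.length_reverse, List.length_take, List.length_reverse]; omega
  have hA0set : A0.toFinset = f := by rw [hA0, List.toFinset_reverse]; exact hf
  have hxA0 : x ∈ A0 := by rw [← List.mem_toFinset, hA0set]; exact hxf
  obtain ⟨W₁, hW₁, htake₁, hrot₁⟩ := extend_rot hk hW (A0.idxOf x)
  set A : List V := (W₁.reverse.take k).reverse with hA
  have hAeq : A = A0.rotate (A0.idxOf x) := hrot₁
  have hAlen : A.length = k := by rw [hAeq, List.length_rotate, hA0len]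
  have hAset : A.toFinset = f := by
    rw [← hA0set, hAeq]; ext z; simp [List.mem_rotate]
  have hAnd : A.Nodup := window_nodup hG hAlen (by rw [hAset]; exact hfG)
  have hAne : A ≠ [] := by intro h; rw [h] at hAlen; simp at hAlen; omega
  -- head of A is x
  have hjlt : A0.idxOf x < A0.length := List.idxOf_lt_length_iff.2 hxA0
  have hheadA : A.head hAne = x := by
    have h1 : A.head? = some x := by
      rw [hAeq, List.rotate_eq_drop_append_take hjlt.le]
      have hdne : A0.drop (A0.idxOf x) ≠ [] := by
        rw [← List.length_pos_iff_ne_nil, List.length_drop]; omega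
      rw [List.head?_append_of_ne_nil _ hdne, List.head?_eq_head hdne, List.head_drop hdne,
        List.getElem_idxOf hjlt]
    rw [List.head?_eq_head hAne] at h1
    exact Option.some.inj h1
  -- append y
  have hkW₁ : k ≤ W₁.length := hW₁.1
  have hBlen : (W₁.reverse.take k).length = k := by
    rw [List.length_take, List.length_reverse]; omega
  have hdrop1 : W₁.reverse.take (k-1) = (A.drop 1).reverse := by
    have h3 : ((W₁.reverse.take k).take (k-1)).reverse
        = ((W₁.reverse.take k).reverse).drop ((W₁.reverse.take k).length - (k-1)) :=
      List.reverse_take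
    rw [List.take_take, min_eq_left (by omega), hBlen] at h3
    have h4 : (W₁.reverse.take k).reverse = A := hA.symm
    rw [h4] at h3
    have h5 : k - (k - 1) = 1 := by omega
    rw [h5] at h3
    rw [← h3, List.reverse_reverse]
  have htailset : (A.drop 1).toFinset = f.erase x := by
    obtain ⟨a, t, hat⟩ : ∃ a t, A = a :: t := List.exists_cons_of_ne_nil hAne
    have hax : a = x := by
      have h1 : A.head? = some a := by rw [hat]; rfl
      rw [List.head?_eq_head hAne, hheadA] at h1
      exact (Option.some.inj h1).symm
    have hnd' : a ∉ t ∧ t.Nodup := by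
      have := hAnd; rw [hat] at this; exact List.nodup_cons.1 this
    have hins : insert a t.toFinset = f := by
      rw [← hAset, hat]; simp
    have hdt : A.drop 1 = t := by rw [hat]; rfl
    rw [hdt, ← hins, hax]
    rw [Finset.erase_insert]
    · rw [← hax]; rw [List.mem_toFinset]; exact fun h => hnd'.1 h
  have hfex : f.erase x = f ∩ g := by
    ext z
    simp only [Finset.mem_erase, Finset.mem_inter]
    constructor
    · rintro ⟨hzx, hzf⟩
      refine ⟨hzf, ?_⟩
      by_contra hzg
      have : z ∈ f \ g := Finset.mem_sdiff.2 ⟨hzf, hzg⟩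
      rw [hx, Finset.mem_singleton] at this
      exact hzx this
    · rintro ⟨hzf, hzg⟩
      exact ⟨fun h => hxg (h ▸ hzg), hzf⟩
  have hgeq : insert y (f ∩ g) = g := by
    ext z
    simp only [Finset.mem_insert, Finset.mem_inter]
    constructor
    · rintro (rfl | ⟨_, hzg⟩)
      · exact hyg
      · exact hzg
    · intro hzg
      by_cases hzf : z ∈ f
      · exact Or.inr ⟨hzf, hzg⟩
      · left
        have : z ∈ g \ f := Finset.mem_sdiff.2 ⟨hzg, hzf⟩
        rw [hy, Finset.mem_singleton] at this
        exact this
  have hvmem : (y :: W₁.reverse.take (k-1)).toFinset ∈ G := by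
    have : (y :: W₁.reverse.take (k-1)).toFinset = g := by
      rw [List.toFinset_cons, hdrop1, List.toFinset_reverse, htailset, hfex, hgeq]
    rw [this]; exact hg
  refine ⟨W₁ ++ [y], ext_one hk hW₁ hvmem, ?_, ?_⟩
  · rw [List.take_append_of_le_length hkW₁, htake₁]
  · have hltk : (W₁ ++ [y]).reverse.take k = y :: W₁.reverse.take (k-1) := by
      rw [List.reverse_append]
      simp only [List.reverse_singleton, List.singleton_append]
      obtain ⟨m, hm⟩ : ∃ m, k = m + 1 := ⟨k - 1, by omega⟩
      subst hm
      rw [List.take_succ_cons]; simp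
    rw [hltk, List.toFinset_cons, hdrop1, List.toFinset_reverse, htailset, hfex, hgeq]

lemma rtg_to_tc {G : Finset (Finset V)} {k : ℕ} (hk : 1 ≤ k) (hG : ∀ e ∈ G, e.card = k)
    {e f : Finset V} (he : e ∈ G) (h : Relation.ReflTransGen (TStep G k) e f) :
    TightlyConnected G k e f := by
  induction h with
  | refl =>
    refine ⟨e.toList, ⟨?_, ?_⟩, ?_, ?_⟩
    · rw [Finset.length_toList, hG e he]
    · intro i hik
      rw [Finset.length_toList, hG e he] at hik
      have hi0 : i = 0 := by omega
      subst hi0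
      rw [List.drop_zero, List.take_of_length_le (by rw [Finset.length_toList, hG e he])]
      rwa [Finset.toList_toFinset]
    · rw [List.take_of_length_le (by rw [Finset.length_toList, hG e he]), Finset.toList_toFinset]
    · rw [List.take_of_length_le (by rw [List.length_reverse, Finset.length_toList, hG e he])]
      rw [List.toFinset_reverse, Finset.toList_toFinset]
  | tail hab hbc ih =>
    obtain ⟨W, hW, hWe, hWb⟩ := ih
    obtain ⟨W', hW', htake, hlast⟩ := extend_edge hk hG hW hWb hbc.1 hbc.2
    exact ⟨W', hW', by rw [htake]; exact hWe, hlast⟩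

lemma rtg_mem {G : Finset (Finset V)} {k : ℕ} {a b : Finset V} (ha : a ∈ G)
    (h : Relation.ReflTransGen (TStep G k) a b) : b ∈ G := by
  induction h with
  | refl => exact ha
  | tail _ hbc _ => exact hbc.1

lemma rtg_symm {G : Finset (Finset V)} {k : ℕ} {a b : Finset V} (ha : a ∈ G)
    (h : Relation.ReflTransGen (TStep G k) a b) :
    Relation.ReflTransGen (TStep G k) b a := by
  induction h with
  | refl => exact Relation.ReflTransGen.refl
  | tail hab hbc ih =>
    refine Relation.ReflTransGen.head ⟨rtg_mem ha hab, ?_⟩ ih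
    rw [Finset.inter_comm]
    exact hbc.2

/-- If a `k`-graph `G` on `n ≥ k` vertices has at least
`(α+δ)·(n choose k)` edges for some `α, δ > 0`, then it has a tight component `G*` whose
down-closure `𝒢*` satisfies
`e_k(𝒢*) ≥ (α+δ) · e_{k-1}(𝒢*) · (n choose k)/(n choose (k-1))`. -/
theorem dense_tight_component [Fintype V] (k n : ℕ) (hk : 1 ≤ k) (hkn : k ≤ n)
    (hn : Fintype.card V = n) (α δ : ℝ) (hα : 0 < α) (hδ : 0 < δ)
    (G : Finset (Finset V)) (hG : ∀ e ∈ G, e.card = k)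
    (hedges : (α + δ) * (Nat.choose n k) ≤ (G.card : ℝ)) :
    ∃ C : Finset (Finset V), IsTightComponent G k C ∧
      (α + δ) * (ecount (downClosure C) (k - 1)) * (Nat.choose n k) /
          (Nat.choose n (k - 1)) ≤ (ecount (downClosure C) k : ℝ) := by
  classical
  have hA0 : (0:ℝ) < (n.choose k : ℝ) := by exact_mod_cast Nat.choose_pos hkn
  have hB0 : (0:ℝ) < (n.choose (k-1) : ℝ) := by
    exact_mod_cast Nat.choose_pos (le_trans (Nat.sub_le k 1) hkn)
  set ball : Finset V → Finset (Finset V) :=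
    fun e => G.filter (fun f => TightlyConnected G k e f) with hball
  have hmem_ball : ∀ e f, f ∈ ball e ↔ f ∈ G ∧ TightlyConnected G k e f :=
    fun e f => Finset.mem_filter
  have hself : ∀ e ∈ G, e ∈ ball e := fun e he =>
    (hmem_ball e e).2 ⟨he, rtg_to_tc hk hG he Relation.ReflTransGen.refl⟩
  set img := G.image ball with himg
  have hcomp : ∀ C ∈ img, IsTightComponent G k C := by
    intro C hC
    obtain ⟨e, he, rfl⟩ := Finset.mem_image.1 hC
    exact ⟨e, he, fun f => hmem_ball e f⟩
  have hdownk : ∀ C ∈ img, ecount (downClosure C) k = C.card := by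
    intro C hC
    obtain ⟨e, he, rfl⟩ := Finset.mem_image.1 hC
    have hCG : ball e ⊆ G := Finset.filter_subset _ _
    have hfeq : (downClosure (ball e)).filter (fun s => s.card = k) = ball e := by
      ext S
      simp only [downClosure, Finset.mem_filter, Finset.mem_biUnion, Finset.mem_powerset]
      constructor
      · rintro ⟨⟨f, hf, hSf⟩, hSk⟩
        have hfk : f.card = k := hG f (hCG hf)
        have : S = f := Finset.eq_of_subset_of_card_le hSf (by omega)
        rwa [this]
      · intro hS
        exact ⟨⟨S, hS, Finset.Subset.refl S⟩, hG S (hCG hS)⟩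
    rw [ecount, hfeq]
  set sh : Finset (Finset V) → Finset (Finset V) :=
    fun C => (downClosure C).filter (fun S => S.card = k - 1) with hsh
  have hshcount : ∀ C, ecount (downClosure C) (k-1) = (sh C).card := fun C => rfl
  have hdisj : ∀ C1 ∈ img, ∀ C2 ∈ img, C1 ≠ C2 → Disjoint (sh C1) (sh C2) := by
    intro C1 h1 C2 h2 hne
    rw [Finset.disjoint_left]
    intro S hS1 hS2
    obtain ⟨e1, he1, rfl⟩ := Finset.mem_image.1 h1
    obtain ⟨e2, he2, rfl⟩ := Finset.mem_image.1 h2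
    apply hne
    simp only [hsh, Finset.mem_filter, downClosure, Finset.mem_biUnion,
      Finset.mem_powerset] at hS1 hS2
    obtain ⟨⟨f1, hf1, hSf1⟩, hSk⟩ := hS1
    obtain ⟨⟨f2, hf2, hSf2⟩, _⟩ := hS2
    obtain ⟨hf1G, htc1⟩ := (hmem_ball e1 f1).1 hf1
    obtain ⟨hf2G, htc2⟩ := (hmem_ball e2 f2).1 hf2
    obtain ⟨he1G, _, hr1⟩ := tc_to_rtg hk hG htc1
    obtain ⟨he2G, _, hr2⟩ := tc_to_rtg hk hG htc2
    have hcap : k - 1 ≤ (f1 ∩ f2).card := by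
      rw [← hSk]
      exact Finset.card_le_card (Finset.subset_inter hSf1 hSf2)
    have h21 : Relation.ReflTransGen (TStep G k) e2 e1 :=
      ((hr2.tail ⟨hf1G, by rwa [Finset.inter_comm]⟩).trans (rtg_symm he1G hr1))
    have h12 : Relation.ReflTransGen (TStep G k) e1 e2 :=
      ((hr1.tail ⟨hf2G, hcap⟩).trans (rtg_symm he2G hr2))
    ext g
    rw [hmem_ball, hmem_ball]
    constructor
    · rintro ⟨hgG, htc⟩
      exact ⟨hgG, rtg_to_tc hk hG he2G (h21.trans (tc_to_rtg hk hG htc).2.2)⟩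
    · rintro ⟨hgG, htc⟩
      exact ⟨hgG, rtg_to_tc hk hG he1G (h12.trans (tc_to_rtg hk hG htc).2.2)⟩
  have hcover : G.card ≤ ∑ C ∈ img, C.card := by
    calc G.card ≤ (img.biUnion id).card := by
          apply Finset.card_le_card
          intro e he
          exact Finset.mem_biUnion.2 ⟨ball e, Finset.mem_image_of_mem _ he, hself e he⟩
      _ ≤ ∑ C ∈ img, (id C).card := Finset.card_biUnion_le
  have hshB : ∑ C ∈ img, (sh C).card ≤ n.choose (k-1) := by
    rw [← Finset.card_biUnion hdisj]
    calc (img.biUnion sh).card ≤ ((Finset.univ : Finset V).powersetCard (k-1)).card := by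
          apply Finset.card_le_card
          intro S hS
          obtain ⟨C, _, hSC⟩ := Finset.mem_biUnion.1 hS
          rw [hsh] at hSC
          simp only [Finset.mem_filter] at hSC
          exact Finset.mem_powersetCard.2 ⟨Finset.subset_univ S, hSC.2⟩
      _ = n.choose (k-1) := by rw [Finset.card_powersetCard, Finset.card_univ, hn]
  by_contra hcon
  push_neg at hcon
  have himgne : img.Nonempty := by
    have hpos : (0:ℝ) < G.card := lt_of_lt_of_le (mul_pos (by linarith) hA0) hedges
    have : G.Nonempty := Finset.card_pos.1 (by exact_mod_cast hpos)
    exact this.image _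
  have hsum : ∀ C ∈ img, (C.card : ℝ) <
      (α+δ) * ((sh C).card) * (n.choose k) / (n.choose (k-1)) := by
    intro C hC
    have h := hcon C (hcomp C hC)
    rw [hshcount C, hdownk C hC] at h
    exact h
  have h1 : (∑ C ∈ img, (C.card:ℝ)) <
      ∑ C ∈ img, (α+δ) * ((sh C).card) * (n.choose k) / (n.choose (k-1)) :=
    Finset.sum_lt_sum_of_nonempty himgne hsum
  have h2 : ∑ C ∈ img, (α+δ) * ((sh C).card) * (n.choose k) / (n.choose (k-1))
      = (α+δ) * (n.choose k) / (n.choose (k-1)) * ∑ C ∈ img, ((sh C).card : ℝ) := by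
    rw [Finset.mul_sum]
    apply Finset.sum_congr rfl
    intro C _
    ring
  have hc1 : (G.card : ℝ) ≤ ∑ C ∈ img, (C.card : ℝ) := by exact_mod_cast hcover
  have hc2 : (∑ C ∈ img, ((sh C).card : ℝ)) ≤ (n.choose (k-1) : ℝ) := by exact_mod_cast hshB
  have hfac : (0:ℝ) ≤ (α+δ) * (n.choose k) / (n.choose (k-1)) := by positivity
  have h3 : (α+δ) * (n.choose k) / (n.choose (k-1)) * ∑ C ∈ img, ((sh C).card : ℝ)
      ≤ (α+δ) * (n.choose k) / (n.choose (k-1)) * (n.choose (k-1)) :=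
    mul_le_mul_of_nonneg_left hc2 hfac
  have h4 : (α+δ) * (n.choose k) / (n.choose (k-1)) * (n.choose (k-1))
      = (α+δ) * (n.choose k) := div_mul_cancel₀ _ (ne_of_gt hB0)
  linarith
end

section
/- Let k ≥ 2, let 2 ≤ ℓ, and suppose there exists a family 𝒮 of subsets of an (n−1)-element vertex set V', each member of size ℓ−2, such that every (k−1)-subset of V' is contained in exactly one member of 𝒮. Let G be the k-graph on V = V' ∪ {w} (where w ∉ V') whose edges are all k-subsets of some member of 𝒮 together with all k-sets containing w. Then e(G) = ((ℓ−1)/k)·binom(n−1, k−1). -/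
/-!
The edges through `w` correspond to the `(k-1)`-subsets of `V'`. The remaining edges are the
`k`-subsets of blocks; no `k`-set lies in two blocks, since it would put a `(k-1)`-set in both,
so there are `|𝒮| · C(ℓ-2, k)` of them. Double counting pairs (`(k-1)`-set, block containing it)
gives `|𝒮| · C(ℓ-2, k-1) = C(n-1, k-1)`, and `k · C(ℓ-2, k) = (ℓ-1-k) · C(ℓ-2, k-1)` turns the
sum into `(ℓ-1)/k · C(n-1, k-1)`.
-/

open Finset

namespace Finset

variable {α : Type*} [DecidableEq α] {𝒮 : Finset (Finset α)} {t : ℕ}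

lemma pairwiseDisjoint_powersetCard_of_card_filter_subset_le_one
    (h𝒮 : ∀ T : Finset α, #T = t → #{S ∈ 𝒮 | T ⊆ S} ≤ 1) {r : ℕ} (htr : t ≤ r) :
    (𝒮 : Set (Finset α)).PairwiseDisjoint (powersetCard r) := by
  intro S hS S' hS' hne
  refine disjoint_left.2 fun e heS heS' => hne ?_
  rw [mem_powersetCard] at heS heS'
  obtain ⟨T, hTe, hT⟩ := exists_subset_card_eq (heS.2 ▸ htr)
  exact card_le_one.1 (h𝒮 T hT) S (mem_filter.2 ⟨hS, hTe.trans heS.1⟩)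
    S' (mem_filter.2 ⟨hS', hTe.trans heS'.1⟩)

lemma card_filter_exists_subset_image {β : Type*} [DecidableEq β] [Fintype β] {f : α → β}
    (hf : f.Injective) (h𝒮 : ∀ T : Finset α, #T = t → #{S ∈ 𝒮 | T ⊆ S} ≤ 1) {r : ℕ}
    (htr : t ≤ r) :
    #{e ∈ (univ : Finset β).powersetCard r | ∃ S ∈ 𝒮, e ⊆ S.image f} =
      ∑ S ∈ 𝒮, (#S).choose r := by
  have hedges : {e ∈ (univ : Finset β).powersetCard r | ∃ S ∈ 𝒮, e ⊆ S.image f} =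
      (𝒮.biUnion (powersetCard r)).image (image f) := by
    ext e
    simp only [mem_filter, mem_powersetCard, subset_univ, true_and, mem_image, mem_biUnion,
      subset_image_iff]
    constructor
    · rintro ⟨he, S, hS, U, hUS, rfl⟩
      exact ⟨U, ⟨S, hS, hUS, by rwa [card_image_of_injective _ hf] at he⟩, rfl⟩
    · rintro ⟨U, ⟨S, hS, hUS, hU⟩, rfl⟩
      exact ⟨by rw [card_image_of_injective _ hf, hU], S, hS, U, hUS, rfl⟩
  rw [hedges, card_image_of_injective _ (image_injective hf),
    card_biUnion (pairwiseDisjoint_powersetCard_of_card_filter_subset_le_one h𝒮 htr)]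
  simp only [card_powersetCard]

lemma card_mul_choose_eq_of_card_filter_subset_eq_one [Fintype α] {b : ℕ}
    (hcard : ∀ S ∈ 𝒮, #S = b) (h𝒮 : ∀ T : Finset α, #T = t → #{S ∈ 𝒮 | T ⊆ S} = 1) :
    #𝒮 * b.choose t = (Fintype.card α).choose t := by
  have := card_mul_eq_card_mul (s := (univ : Finset α).powersetCard t) (t := 𝒮)
    (fun T S : Finset α => T ⊆ S) (m := 1) (n := b.choose t)
    (fun T hT => by rw [bipartiteAbove]; exact h𝒮 T (mem_powersetCard.1 hT).2) fun S hS => by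
      rw [bipartiteBelow, ← hcard S hS, ← card_powersetCard]
      congr 1
      ext T
      simp [and_comm]
  rw [← this, card_powersetCard, card_univ, mul_one]

end Finset

lemma Nat.choose_add_mul_choose_succ_mul {s b t m : ℕ} (h : s * b.choose t = m.choose t) :
    (m.choose t + s * b.choose (t + 1)) * (t + 1) = (b + 1) * m.choose t := by
  rcases lt_or_ge b t with hbt | htb
  · rw [← h, Nat.choose_eq_zero_of_lt hbt, Nat.choose_eq_zero_of_lt (by omega)]
    simp
  · calc (m.choose t + s * b.choose (t + 1)) * (t + 1)
        = m.choose t * (t + 1) + s * b.choose t * (b - t) := by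
          rw [add_mul, mul_assoc s, Nat.choose_succ_right_eq, mul_assoc]
      _ = (b + 1) * m.choose t := by
          rw [h, ← mul_add, mul_comm]
          congr 1
          omega

theorem design_extremal_count_general (k ℓ : ℕ) (hk : 2 ≤ k) (hℓ : 2 ≤ ℓ)
    {V' : Type*} [DecidableEq V'] [Fintype V']
    (𝒮 : Finset (Finset V'))
    (hScard : ∀ S ∈ 𝒮, S.card = ℓ - 2)
    (hdesign : ∀ T : Finset V', T.card = k - 1 → (𝒮.filter fun S => T ⊆ S).card = 1) :
    (((Finset.univ.powersetCard k : Finset (Finset (Option V'))).filter fun e =>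
        none ∈ e ∨ ∃ S ∈ 𝒮, e ⊆ S.image some).card : ℝ)
      = ((ℓ : ℝ) - 1) / k * (Nat.choose (Fintype.card V') (k - 1)) := by
  obtain ⟨t, rfl⟩ : ∃ t, k = t + 1 := ⟨k - 1, by omega⟩
  obtain ⟨b, rfl⟩ : ∃ b, ℓ = b + 2 := ⟨ℓ - 2, by omega⟩
  simp only [Nat.add_sub_cancel] at hScard hdesign ⊢
  set E := (univ : Finset (Option V')).powersetCard (t + 1)
  have hdisj : Disjoint {e ∈ E | none ∈ e} {e ∈ E | ∃ S ∈ 𝒮, e ⊆ S.image some} := by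
    refine disjoint_filter.2 fun e _ hnone ⟨S, _, heS⟩ => ?_
    simpa using heS hnone
  have hthrough : #{e ∈ E | none ∈ e} = (Fintype.card V').choose t := by
    simpa using
      card_filter_powersetCard_subset {(none : Option V')} univ (t + 1) (subset_univ _) (by simp)
  have hinside : #{e ∈ E | ∃ S ∈ 𝒮, e ⊆ S.image some} = #𝒮 * b.choose (t + 1) := by
    rw [card_filter_exists_subset_image (Option.some_injective V') (fun T hT => (hdesign T hT).le)
      t.le_succ, sum_congr rfl fun S hS => by rw [hScard S hS], sum_const, smul_eq_mul]
  have hcount := Nat.choose_add_mul_choose_succ_mul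
    (card_mul_choose_eq_of_card_filter_subset_eq_one hScard hdesign)
  rw [filter_or, card_union_of_disjoint hdisj, hthrough, hinside,
    show ((b + 2 : ℕ) : ℝ) - 1 = (b + 1 : ℕ) by push_cast; ring, div_mul_eq_mul_div,
    eq_div_iff (by positivity)]
  exact_mod_cast hcount

/-- Suppose `𝒮` is a family of `(ℓ−2)`-subsets of an `(n−1)`-element
set `V'` covering every `(k−1)`-subset of `V'` exactly once, and let `G` be the `k`-graph
on `V = V' ∪ {w}` whose edges are all `k`-subsets of members of `𝒮` together with all
`k`-sets containing the extra vertex `w`. Then `e(G) = ((ℓ−1)/k)·binom(n−1, k−1)`. -/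
theorem design_extremal_count (k ℓ n : ℕ) (hk : 2 ≤ k) (hℓ : 2 ≤ ℓ)
    {V' : Type*} [DecidableEq V'] [Fintype V'] (hn : Fintype.card V' + 1 = n)
    (𝒮 : Finset (Finset V'))
    (hScard : ∀ S ∈ 𝒮, S.card = ℓ - 2)
    (hdesign : ∀ T : Finset V', T.card = k - 1 → (𝒮.filter fun S => T ⊆ S).card = 1) :
    (((Finset.univ.powersetCard k : Finset (Finset (Option V'))).filter fun e =>
        none ∈ e ∨ ∃ S ∈ 𝒮, e ⊆ S.image some).card : ℝ)
      = ((ℓ : ℝ) - 1) / k * (Nat.choose (Fintype.card V') (k - 1)) :=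
  design_extremal_count_general k ℓ hk hℓ 𝒮 hScard hdesign
end
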